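/- arXiv:0911.5019 — 9 statements merged into one kernel-verified Lean document; each statement's English description precedes it below -/
import Mathlib

section
/- For every positive integer n, the sum of (-1)^(number of parts) over all partitions of n into distinct parts whose smallest part is odd equals (-1)^k if n = k^2 for some positive integer k, and equals 0 otherwise. -/
/-!
A sign-reversing involution. For `S ∈ Pdo n` let `a` be such that `1, 3, …, 2a - 1 ∈ S` and
`2a + 1 ∉ S`. Either merge the part `2a - 1` with the smallest even part `e` into the odd part
`2a - 1 + e` (allowed when this stays below every other odd part `≥ 2a`), or split the smallest
odd part `o ≥ 2a` into `2a + 1` and the even part `o - 2a - 1`. The two moves undo each other,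
preserve the sum and change the number of parts by one. The partitions admitting neither move are
the staircases `{1, 3, …, 2k - 1}` of `k²` into `k` parts.
-/

open scoped Classical in
/-- `Pdo n` : partitions of `n` into distinct parts with smallest part odd,
encoded as finsets of parts. -/
noncomputable def Pdo (n : ℕ) : Finset (Finset ℕ) :=
  (Finset.range (n + 1)).powerset.filter
    (fun S => S.sum id = n ∧ ∃ m ∈ S, Odd m ∧ ∀ x ∈ S, m ≤ x)

namespace Pdo

open Finset

variable {S T : Finset ℕ} {b e k n : ℕ}

theorem mem_iff : S ∈ Pdo n ↔ S.sum id = n ∧ ∃ m ∈ S, Odd m ∧ ∀ x ∈ S, m ≤ x := by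
  classical
  simp only [Pdo, mem_filter, mem_powerset, and_iff_right_iff_imp]
  rintro ⟨rfl, -⟩ x hx
  exact mem_range_succ_iff.2 (single_le_sum (f := id) (fun _ _ => Nat.zero_le _) hx)

theorem zero_notMem (hS : S ∈ Pdo n) : 0 ∉ S := fun h0 => by
  obtain ⟨m, -, hm, hle⟩ := (mem_iff.1 hS).2
  simp [Nat.le_zero.1 (hle 0 h0)] at hm

theorem exists_odd_notMem (S : Finset ℕ) : ∃ a, 2 * a + 1 ∉ S :=
  ⟨S.sum id, fun h => by
    have := single_le_sum (f := id) (fun _ _ => Nat.zero_le _) h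
    simp only [id] at this
    omega⟩

/-- The number `a` of odd numbers `1, 3, …, 2a - 1` that `S` contains before it first misses one. -/
noncomputable def oddRun (S : Finset ℕ) : ℕ := by
  classical exact Nat.find (exists_odd_notMem S)

theorem oddRun_eq_iff : oddRun S = b ↔ (∀ i < b, 2 * i + 1 ∈ S) ∧ 2 * b + 1 ∉ S := by
  classical
  rw [oddRun, Nat.find_eq_iff]
  simp only [not_not]
  exact and_comm

theorem odd_mem_of_lt_oddRun {i : ℕ} (h : i < oddRun S) : 2 * i + 1 ∈ S :=
  (oddRun_eq_iff.1 rfl).1 i h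

/-- The merge of `2b + 1` and `e` in `S` is legal; the result is described by `SplitData`, with the
same `b` and `e`: its odd run stops at `2b - 1`, and `2b + 1 + e` is its smallest odd part above. -/
structure MergeData (S : Finset ℕ) (b e : ℕ) : Prop where
  oddRun_eq : oddRun S = b + 1
  mem : e ∈ S
  even : Even e
  le_of_even : ∀ x ∈ S, Even x → e ≤ x
  lt_of_odd : ∀ x ∈ S, Odd x → 2 * b + 2 ≤ x → 2 * b + 1 + e < x

structure SplitData (T : Finset ℕ) (b e : ℕ) : Prop where
  oddRun_eq : oddRun T = b
  mem : 2 * b + 1 + e ∈ T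
  even : Even e
  le_of_odd : ∀ x ∈ T, Odd x → 2 * b ≤ x → 2 * b + 1 + e ≤ x
  lt_of_even : ∀ x ∈ T, Even x → e < x

def mergeAt (b e : ℕ) (S : Finset ℕ) : Finset ℕ :=
  insert (2 * b + 1 + e) ((S.erase e).erase (2 * b + 1))

def splitAt (b e : ℕ) (T : Finset ℕ) : Finset ℕ :=
  insert (2 * b + 1) (insert e (T.erase (2 * b + 1 + e)))

theorem mem_splitAt {x : ℕ} :
    x ∈ splitAt b e T ↔ x = 2 * b + 1 ∨ x = e ∨ x ≠ 2 * b + 1 + e ∧ x ∈ T := by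
  simp only [splitAt, mem_insert, mem_erase]

theorem mem_mergeAt {x : ℕ} :
    x ∈ mergeAt b e S ↔ x = 2 * b + 1 + e ∨ x ≠ 2 * b + 1 ∧ x ≠ e ∧ x ∈ S := by
  simp only [mergeAt, mem_insert, mem_erase]

namespace SplitData

theorem odd_mem (h : SplitData T b e) {i : ℕ} (hi : i < b) : 2 * i + 1 ∈ T :=
  (oddRun_eq_iff.1 h.oddRun_eq).1 i hi

theorem odd_notMem (h : SplitData T b e) : 2 * b + 1 ∉ T :=
  (oddRun_eq_iff.1 h.oddRun_eq).2

theorem notMem (h : SplitData T b e) : e ∉ T :=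
  fun he => (h.lt_of_even e he h.even).false

theorem two_le (h : SplitData T b e) : 2 ≤ e := by
  obtain ⟨r, rfl⟩ := h.even
  rcases Nat.eq_zero_or_pos r with rfl | hr
  · exact absurd h.mem h.odd_notMem
  · omega

theorem notMem_insert_erase (h : SplitData T b e) :
    2 * b + 1 ∉ insert e (T.erase (2 * b + 1 + e)) ∧ e ∉ T.erase (2 * b + 1 + e) := by
  have hne : 2 * b + 1 ≠ e := by
    obtain ⟨r, rfl⟩ := h.even
    omega
  simp only [mem_insert, mem_erase, not_or, not_and]
  exact ⟨⟨hne, fun _ => h.odd_notMem⟩, fun _ => h.notMem⟩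

theorem card_splitAt (h : SplitData T b e) : (splitAt b e T).card = T.card + 1 := by
  obtain ⟨hodd, he⟩ := h.notMem_insert_erase
  rw [splitAt, card_insert_of_notMem hodd, card_insert_of_notMem he, card_erase_of_mem h.mem]
  have := card_pos.2 ⟨_, h.mem⟩
  omega

theorem sum_splitAt (h : SplitData T b e) : (splitAt b e T).sum id = T.sum id := by
  obtain ⟨hodd, he⟩ := h.notMem_insert_erase
  rw [splitAt, sum_insert hodd, sum_insert he, ← add_sum_erase T id h.mem]
  simp only [id]
  ring

theorem mergeData_splitAt (h : SplitData T b e) : MergeData (splitAt b e T) b e where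
  oddRun_eq := by
    have := h.two_le
    obtain ⟨r, rfl⟩ := h.even
    refine oddRun_eq_iff.2 ⟨fun i hi => mem_splitAt.2 ?_, fun hmem => ?_⟩
    · rcases (show i < b ∨ i = b by omega) with hi | rfl
      · exact .inr (.inr ⟨by omega, h.odd_mem hi⟩)
      · exact .inl rfl
    · rcases mem_splitAt.1 hmem with h1 | h1 | ⟨hne, hT⟩
      · omega
      · omega
      · have := h.le_of_odd _ hT ⟨b + 1, by ring⟩ (by omega)
        omega
  mem := mem_splitAt.2 (.inr (.inl rfl))
  even := h.even
  le_of_even x hx hxe := by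
    rcases mem_splitAt.1 hx with rfl | rfl | ⟨-, hT⟩
    · exact absurd hxe (by simp)
    · exact le_rfl
    · exact (h.lt_of_even x hT hxe).le
  lt_of_odd x hx hxo hle := by
    rcases mem_splitAt.1 hx with rfl | rfl | ⟨hne, hT⟩
    · omega
    · exact absurd h.even (Nat.not_even_iff_odd.2 hxo)
    · exact lt_of_le_of_ne (h.le_of_odd x hT hxo (by omega)) (Ne.symm hne)

theorem mergeAt_splitAt (h : SplitData T b e) : mergeAt b e (splitAt b e T) = T := by
  ext x
  have hx : x = e → x ∉ T := fun hx => hx ▸ h.notMem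
  have hx' : x = 2 * b + 1 → x ∉ T := fun hx => hx ▸ h.odd_notMem
  rw [mem_mergeAt, mem_splitAt]
  constructor
  · rintro (rfl | ⟨h1, h2, rfl | rfl | ⟨-, hT⟩⟩)
    exacts [h.mem, absurd rfl h1, absurd rfl h2, hT]
  · intro hT
    by_cases hxo : x = 2 * b + 1 + e
    · exact .inl hxo
    · exact .inr ⟨fun h1 => hx' h1 hT, fun h2 => hx h2 hT, .inr (.inr ⟨hxo, hT⟩)⟩

end SplitData

namespace MergeData

theorem odd_mem (h : MergeData S b e) {i : ℕ} (hi : i ≤ b) : 2 * i + 1 ∈ S :=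
  (oddRun_eq_iff.1 h.oddRun_eq).1 i (Nat.lt_succ_of_le hi)

theorem two_le (h : MergeData S b e) (h0 : 0 ∉ S) : 2 ≤ e := by
  obtain ⟨r, hr⟩ := h.even
  have : e ≠ 0 := fun he => h0 (he ▸ h.mem)
  omega

theorem splitData_mergeAt (h : MergeData S b e) (h0 : 0 ∉ S) : SplitData (mergeAt b e S) b e := by
  have := h.two_le h0
  obtain ⟨r, hr⟩ := h.even
  refine ⟨oddRun_eq_iff.2 ⟨fun i hi => ?_, fun hmem => ?_⟩, mem_mergeAt.2 (.inl rfl), h.even,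
    fun x hx hxo hle => ?_, fun x hx hxe => ?_⟩
  · exact mem_mergeAt.2 (.inr ⟨by omega, by omega, h.odd_mem hi.le⟩)
  · rcases mem_mergeAt.1 hmem with h1 | ⟨h1, -⟩ <;> omega
  · rcases mem_mergeAt.1 hx with rfl | ⟨h1, -, hS⟩
    · exact le_rfl
    · obtain ⟨m, rfl⟩ := hxo
      exact (h.lt_of_odd _ hS ⟨m, rfl⟩ (by omega)).le
  · rcases mem_mergeAt.1 hx with rfl | ⟨-, h2, hS⟩
    · obtain ⟨m, hm⟩ := hxe
      omega
    · exact lt_of_le_of_ne (h.le_of_even x hS hxe) (Ne.symm h2)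

theorem splitAt_mergeAt (h : MergeData S b e) (h0 : 0 ∉ S) : splitAt b e (mergeAt b e S) = S := by
  have := h.two_le h0
  obtain ⟨r, hr⟩ := h.even
  have ho : 2 * b + 1 + e ∉ S := fun ho =>
    (h.lt_of_odd _ ho ⟨b + r, by omega⟩ (by omega)).false
  ext x
  rw [mem_splitAt, mem_mergeAt]
  constructor
  · rintro (rfl | rfl | ⟨h1, rfl | ⟨-, -, hS⟩⟩)
    exacts [h.odd_mem le_rfl, h.mem, absurd rfl h1, hS]
  · intro hS
    by_cases h1 : x = 2 * b + 1
    · exact .inl h1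
    by_cases h2 : x = e
    · exact .inr (.inl h2)
    exact .inr (.inr ⟨fun h3 => ho (h3 ▸ hS), .inr ⟨h1, h2, hS⟩⟩)

theorem unique {b' e' : ℕ} (h : MergeData S b e) (h' : MergeData S b' e') : b = b' ∧ e = e' :=
  ⟨Nat.succ_injective (h.oddRun_eq.symm.trans h'.oddRun_eq),
    le_antisymm (h.le_of_even _ h'.mem h'.even) (h'.le_of_even _ h.mem h.even)⟩

end MergeData

theorem SplitData.unique {b' e' : ℕ} (h : SplitData T b e) (h' : SplitData T b' e') :
    b = b' ∧ e = e' := by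
  obtain rfl : b = b' := h.oddRun_eq.symm.trans h'.oddRun_eq
  have := h.le_of_odd _ h'.mem ((odd_two_mul_add_one _).add_even h'.even) (by omega)
  have := h'.le_of_odd _ h.mem ((odd_two_mul_add_one _).add_even h.even) (by omega)
  exact ⟨rfl, by omega⟩

theorem SplitData.not_mergeData {b' e' : ℕ} (h : SplitData T b e) : ¬ MergeData T b' e' := by
  intro h'
  have hb := h.oddRun_eq.symm.trans h'.oddRun_eq
  have := h.lt_of_even _ h'.mem h'.even
  have := h'.lt_of_odd _ h.mem ((odd_two_mul_add_one _).add_even h.even) (by omega)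
  obtain ⟨r, rfl⟩ := h.even
  obtain ⟨r', rfl⟩ := h'.even
  omega

theorem exists_odd_min_of_one_mem (h1 : 1 ∈ S) (h0 : 0 ∉ S) :
    ∃ m ∈ S, Odd m ∧ ∀ x ∈ S, m ≤ x :=
  ⟨1, h1, odd_one, fun _ hx => Nat.one_le_iff_ne_zero.2 (ne_of_mem_of_not_mem hx h0)⟩

theorem SplitData.exists_odd_min (h : SplitData T b e) (h0 : 0 ∉ T) :
    ∃ m ∈ T, Odd m ∧ ∀ x ∈ T, m ≤ x := by
  rcases Nat.eq_zero_or_pos b with rfl | hb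
  · refine ⟨_, h.mem, (odd_two_mul_add_one 0).add_even h.even, fun x hx => ?_⟩
    rcases Nat.even_or_odd x with hxe | hxo
    · have := h.lt_of_even x hx hxe
      omega
    · exact h.le_of_odd x hx hxo (Nat.zero_le _)
  · exact exists_odd_min_of_one_mem (h.odd_mem hb) h0

theorem SplitData.splitAt_mem_Pdo_iff (h : SplitData T b e) : splitAt b e T ∈ Pdo n ↔ T ∈ Pdo n := by
  have := h.two_le
  constructor
  · intro hS
    have h0 : 0 ∉ T := fun h0 => zero_notMem hS (mem_splitAt.2 (.inr (.inr ⟨by omega, h0⟩)))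
    exact mem_iff.2 ⟨h.sum_splitAt ▸ (mem_iff.1 hS).1, h.exists_odd_min h0⟩
  · intro hT
    have h0 : 0 ∉ splitAt b e T := by
      rw [mem_splitAt]
      rintro (h0 | h0 | ⟨-, h0⟩)
      · omega
      · omega
      · exact zero_notMem hT h0
    exact mem_iff.2 ⟨h.sum_splitAt.trans (mem_iff.1 hT).1,
      exists_odd_min_of_one_mem (h.mergeData_splitAt.odd_mem (Nat.zero_le b)) h0⟩

open Classical in
/-- The parameters are unique when they exist (`MergeData.unique`, `SplitData.unique`). -/
noncomputable def involution (S : Finset ℕ) : Finset ℕ :=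
  if h : ∃ p : ℕ × ℕ, MergeData S p.1 p.2 then mergeAt h.choose.1 h.choose.2 S
  else if h : ∃ p : ℕ × ℕ, SplitData S p.1 p.2 then splitAt h.choose.1 h.choose.2 S
  else S

theorem MergeData.involution_eq (h : MergeData S b e) : involution S = mergeAt b e S := by
  have hex : ∃ p : ℕ × ℕ, MergeData S p.1 p.2 := ⟨(b, e), h⟩
  obtain ⟨hb, he⟩ := hex.choose_spec.unique h
  rw [involution, dif_pos hex, hb, he]

theorem SplitData.involution_eq (h : SplitData T b e) : involution T = splitAt b e T := by
  have hex : ∃ p : ℕ × ℕ, SplitData T p.1 p.2 := ⟨(b, e), h⟩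
  obtain ⟨hb, he⟩ := hex.choose_spec.unique h
  rw [involution, dif_neg fun ⟨_, h'⟩ => h.not_mergeData h', dif_pos hex, hb, he]

def SplitsTo (T S : Finset ℕ) : Prop :=
  ∃ b e, SplitData T b e ∧ splitAt b e T = S

theorem MergeData.splitsTo (h : MergeData S b e) (h0 : 0 ∉ S) : SplitsTo (mergeAt b e S) S :=
  ⟨b, e, h.splitData_mergeAt h0, h.splitAt_mergeAt h0⟩

namespace SplitsTo

theorem involution_eq (h : SplitsTo T S) : involution T = S ∧ involution S = T := by
  obtain ⟨b, e, h, rfl⟩ := h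
  exact ⟨h.involution_eq, h.mergeData_splitAt.involution_eq.trans h.mergeAt_splitAt⟩

theorem card_eq (h : SplitsTo T S) : S.card = T.card + 1 := by
  obtain ⟨b, e, h, rfl⟩ := h
  exact h.card_splitAt

theorem mem_Pdo_iff (h : SplitsTo T S) : S ∈ Pdo n ↔ T ∈ Pdo n := by
  obtain ⟨b, e, h, rfl⟩ := h
  exact h.splitAt_mem_Pdo_iff

end SplitsTo

def oddPrefix (k : ℕ) : Finset ℕ := (range k).image (fun i => 2 * i + 1)

theorem mem_oddPrefix {x : ℕ} : x ∈ oddPrefix k ↔ Odd x ∧ x < 2 * k := by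
  simp only [oddPrefix, mem_image, mem_range, Nat.odd_iff]
  constructor
  · rintro ⟨i, hi, rfl⟩
    omega
  · exact fun hx => ⟨x / 2, by omega, by omega⟩

theorem card_oddPrefix (k : ℕ) : (oddPrefix k).card = k := by
  rw [oddPrefix, card_image_of_injective _ fun i j h => by omega, card_range]

theorem sum_oddPrefix (k : ℕ) : (oddPrefix k).sum id = k * k := by
  induction k with
  | zero => rfl
  | succ k ih =>
    rw [oddPrefix, range_add_one, image_insert, sum_insert, ← oddPrefix, ih, id]
    · ring
    · simp

theorem oddRun_oddPrefix (k : ℕ) : oddRun (oddPrefix k) = k :=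
  oddRun_eq_iff.2 ⟨fun i hi => mem_oddPrefix.2 ⟨odd_two_mul_add_one i, by omega⟩,
    fun h => by simp [mem_oddPrefix] at h⟩

theorem oddPrefix_mem_Pdo_iff : oddPrefix k ∈ Pdo n ↔ 0 < k ∧ k * k = n := by
  rw [mem_iff, sum_oddPrefix, and_comm]
  refine and_congr_left fun _ => ⟨fun ⟨m, hm, _⟩ => ?_, fun hk => ?_⟩
  · have := (mem_oddPrefix.1 hm).2
    omega
  · exact exists_odd_min_of_one_mem (mem_oddPrefix.2 ⟨odd_one, by omega⟩)
      fun h0 => by simp [mem_oddPrefix] at h0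

theorem SplitData.ne_oddPrefix (h : SplitData T b e) (k : ℕ) : T ≠ oddPrefix k := by
  rintro rfl
  have hk := h.oddRun_eq
  rw [oddRun_oddPrefix] at hk
  have := (mem_oddPrefix.1 h.mem).2
  omega

theorem MergeData.ne_oddPrefix (h : MergeData S b e) (k : ℕ) : S ≠ oddPrefix k := by
  rintro rfl
  exact Nat.not_even_iff_odd.2 (mem_oddPrefix.1 h.mem).1 h.even

theorem SplitsTo.not_exists_oddPrefix (h : SplitsTo T S) :
    (¬∃ k, T = oddPrefix k) ∧ ¬∃ k, S = oddPrefix k := by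
  obtain ⟨b, e, h, rfl⟩ := h
  exact ⟨fun ⟨k, hk⟩ => h.ne_oddPrefix k hk, fun ⟨k, hk⟩ => h.mergeData_splitAt.ne_oddPrefix k hk⟩

theorem eq_oddPrefix_of_forall (h : ∀ x ∈ S, Odd x ∧ x < 2 * oddRun S) :
    S = oddPrefix (oddRun S) := by
  ext x
  refine ⟨fun hx => mem_oddPrefix.2 (h x hx), fun hx => ?_⟩
  obtain ⟨⟨i, rfl⟩, hi⟩ := mem_oddPrefix.1 hx
  exact odd_mem_of_lt_oddRun (by omega)

theorem mergeData_of_isLeast_even (he : IsLeast {x | x ∈ S ∧ Even x} e) (ha : 0 < oddRun S)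
    (hlt : ∀ x ∈ S, Odd x → 2 * oddRun S ≤ x → 2 * oddRun S - 1 + e < x) :
    MergeData S (oddRun S - 1) e where
  oddRun_eq := by omega
  mem := he.1.1
  even := he.1.2
  le_of_even _ hx hxe := he.2 ⟨hx, hxe⟩
  lt_of_odd x hx hxo hle := by
    have := hlt x hx hxo (by omega)
    omega

theorem exists_mergeData_or_splitData_of_isLeast_odd {o : ℕ} (hS : S ∈ Pdo n)
    (ho : IsLeast {x | x ∈ S ∧ Odd x ∧ 2 * oddRun S ≤ x} o) :
    (∃ b e, MergeData S b e) ∨ ∃ b e, SplitData S b e := by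
  obtain ⟨⟨hoS, hoo, hao⟩, homin⟩ := ho
  have hoa : 2 * oddRun S + 1 ≤ o := by
    obtain ⟨r, rfl⟩ := hoo
    omega
  by_cases hsplit : ∀ x ∈ S, Even x → o < x + 2 * oddRun S + 1
  · refine .inr ⟨oddRun S, o - (2 * oddRun S + 1), rfl, by rwa [Nat.add_sub_cancel' hoa],
      Nat.Odd.sub_odd hoo (odd_two_mul_add_one _), fun x hx hxo hle => ?_,
      fun x hx hxe => by have := hsplit x hx hxe; omega⟩
    rw [Nat.add_sub_cancel' hoa]
    exact homin ⟨hx, hxo, hle⟩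
  push Not at hsplit
  obtain ⟨x, hx, hxe, hxo⟩ := hsplit
  have he := isLeast_csInf (s := {x | x ∈ S ∧ Even x}) ⟨x, hx, hxe⟩
  have hex := he.2 ⟨hx, hxe⟩
  obtain ⟨m, hm, hmo, hmin⟩ := (mem_iff.1 hS).2
  have ha0 : 0 < oddRun S := by
    by_contra! ha0
    have := homin ⟨hm, hmo, by omega⟩
    have := hmin x hx
    omega
  refine .inl ⟨_, _, mergeData_of_isLeast_even he ha0 fun y hy hyo hle => ?_⟩
  have := homin ⟨hy, hyo, hle⟩
  omega

theorem exists_mergeData_or_splitData (hS : S ∈ Pdo n) (hns : ¬∃ k, S = oddPrefix k) :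
    (∃ b e, MergeData S b e) ∨ ∃ b e, SplitData S b e := by
  by_cases hout : ∃ o, o ∈ S ∧ Odd o ∧ 2 * oddRun S ≤ o
  · exact exists_mergeData_or_splitData_of_isLeast_odd hS (isLeast_csInf hout)
  push Not at hout
  by_cases hev : ∃ x, x ∈ S ∧ Even x
  · obtain ⟨m, hm, hmo, -⟩ := (mem_iff.1 hS).2
    have ha0 : 0 < oddRun S := by
      have := hout m hm hmo
      omega
    exact .inl ⟨_, _, mergeData_of_isLeast_even (isLeast_csInf hev) ha0
      fun y hy hyo hle => absurd (hout y hy hyo) (by omega)⟩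
  push Not at hev
  have hodd x (hx : x ∈ S) : Odd x := Nat.not_even_iff_odd.1 (hev x hx)
  exact absurd ⟨_, eq_oddPrefix_of_forall fun x hx => ⟨hodd x hx, hout x hx (hodd x hx)⟩⟩ hns

theorem exists_splitsTo_involution (hS : S ∈ Pdo n) (hns : ¬∃ k, S = oddPrefix k) :
    SplitsTo S (involution S) ∨ SplitsTo (involution S) S := by
  rcases exists_mergeData_or_splitData hS hns with ⟨b, e, h⟩ | ⟨b, e, h⟩
  · rw [h.involution_eq]
    exact .inr (h.splitsTo (zero_notMem hS))
  · exact .inl ⟨b, e, h, h.involution_eq.symm⟩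

theorem involution_spec (hS : S ∈ Pdo n) (hns : ¬∃ k, S = oddPrefix k) :
    involution S ∈ Pdo n ∧ (¬∃ k, involution S = oddPrefix k) ∧
      involution (involution S) = S ∧ (-1 : ℤ) ^ S.card + (-1) ^ (involution S).card = 0 := by
  rcases exists_splitsTo_involution hS hns with h | h
  · refine ⟨h.mem_Pdo_iff.2 hS, h.not_exists_oddPrefix.2, h.involution_eq.2, ?_⟩
    rw [h.card_eq, pow_succ]
    ring
  · refine ⟨h.mem_Pdo_iff.1 hS, h.not_exists_oddPrefix.1, h.involution_eq.1, ?_⟩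
    rw [h.card_eq, pow_succ]
    ring

open scoped Classical in
theorem sum_filter_not_exists_oddPrefix :
    ∑ S ∈ (Pdo n).filter (fun S => ¬∃ k, S = oddPrefix k), (-1 : ℤ) ^ S.card = 0 := by
  refine sum_involution (fun S _ => involution S) (fun S hS => ?_) (fun S hS hf hfix => ?_)
    (fun S hS => ?_) (fun S hS => ?_) <;>
  obtain ⟨hS, hns⟩ := mem_filter.1 hS <;>
  obtain ⟨hmem, hns', hinv, hsum⟩ := involution_spec hS hns
  · exact hsum
  · rw [hfix] at hsum
    exact hf (by linarith)
  · exact mem_filter.2 ⟨hmem, hns'⟩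
  · exact hinv

open scoped Classical in
theorem filter_exists_oddPrefix (hn : 1 ≤ n) :
    (Pdo n).filter (fun S => ∃ k, S = oddPrefix k) =
      if IsSquare n then {oddPrefix n.sqrt} else ∅ := by
  ext S
  rw [mem_filter]
  split_ifs with hsq
  · obtain ⟨k, rfl⟩ := hsq
    rw [Nat.sqrt_eq, mem_singleton]
    constructor
    · rintro ⟨hS, j, rfl⟩
      rw [Nat.mul_self_inj.1 (oddPrefix_mem_Pdo_iff.1 hS).2]
    · rintro rfl
      exact ⟨oddPrefix_mem_Pdo_iff.2 ⟨Nat.pos_of_mul_pos_left hn, rfl⟩, k, rfl⟩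
  · simp only [notMem_empty, iff_false, not_and]
    rintro hS ⟨j, rfl⟩
    exact hsq ⟨j, (oddPrefix_mem_Pdo_iff.1 hS).2.symm⟩

end Pdo

open scoped Classical in
theorem sum_neg_one_pow_Pdo (n : ℕ) (hn : 1 ≤ n) :
    ∑ S ∈ Pdo n, (-1 : ℤ) ^ S.card =
      if IsSquare n then (-1 : ℤ) ^ Nat.sqrt n else 0 := by
  rw [← Finset.sum_filter_add_sum_filter_not (Pdo n) (fun S => ∃ k, S = Pdo.oddPrefix k),
    Pdo.sum_filter_not_exists_oddPrefix, add_zero, Pdo.filter_exists_oddPrefix hn]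
  split_ifs <;> simp [Pdo.card_oddPrefix]
end

section
/- For every positive integer n, let R_e(n) (resp. R_o(n)) be the number of partitions of n into distinct parts with smallest part odd having an even (resp. odd) number of parts. Then R_e(n) - R_o(n) = (-1)^k if n = k^2 for some positive integer k, and 0 otherwise. -/
open Finset

theorem card_filter_even_sub_card_filter_odd {α : Type*} (s : Finset α) (f : α → ℕ) :
    ((s.filter (fun a => Even (f a))).card : ℤ) - ((s.filter (fun a => Odd (f a))).card : ℤ) =
      ∑ a ∈ s, (-1 : ℤ) ^ f a := by
  rw [← sum_filter_add_sum_filter_not s (fun a => Even (f a)),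
    sum_congr rfl fun a ha => (mem_filter.1 ha).2.neg_one_pow,
    sum_congr rfl fun a ha => (Nat.not_even_iff_odd.1 (mem_filter.1 ha).2).neg_one_pow]
  simp_rw [Nat.not_even_iff_odd]
  simp [sub_eq_add_neg]

section SplitMerge

variable {M : Type*} [AddCommMonoid M] [DecidableEq M] {S : Finset M} {a b z : M}

def splitPart (S : Finset M) (a b : M) : Finset M := insert a (insert b (S.erase (a + b)))

def mergeParts (S : Finset M) (a b : M) : Finset M := insert (a + b) ((S.erase a).erase b)

theorem mem_splitPart :
    z ∈ splitPart S a b ↔ z = a ∨ z = b ∨ (z ≠ a + b ∧ z ∈ S) := by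
  simp [splitPart]

theorem mem_mergeParts :
    z ∈ mergeParts S a b ↔ z = a + b ∨ (z ≠ b ∧ z ≠ a ∧ z ∈ S) := by
  simp [mergeParts]

theorem sum_splitPart (ha : a ∉ S) (hb : b ∉ S) (hab : a ≠ b) (hu : a + b ∈ S) :
    (splitPart S a b).sum id = S.sum id := by
  have hb' : b ∉ S.erase (a + b) := fun h => hb (mem_of_mem_erase h)
  have ha' : a ∉ insert b (S.erase (a + b)) := by simp [hab, ha]
  rw [splitPart, sum_insert ha', sum_insert hb', ← add_assoc]
  exact add_sum_erase S id hu

theorem card_splitPart (ha : a ∉ S) (hb : b ∉ S) (hab : a ≠ b) (hu : a + b ∈ S) :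
    (splitPart S a b).card = S.card + 1 := by
  have hb' : b ∉ S.erase (a + b) := fun h => hb (mem_of_mem_erase h)
  have ha' : a ∉ insert b (S.erase (a + b)) := by simp [hab, ha]
  rw [splitPart, card_insert_of_notMem ha', card_insert_of_notMem hb', card_erase_add_one hu]

theorem sum_mergeParts (ha : a ∈ S) (hb : b ∈ S) (hab : a ≠ b) (hu : a + b ∉ S) :
    (mergeParts S a b).sum id = S.sum id := by
  have hu' : a + b ∉ (S.erase a).erase b := fun h => hu (mem_of_mem_erase (mem_of_mem_erase h))
  rw [mergeParts, sum_insert hu', ← add_sum_erase S id ha,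
    ← add_sum_erase _ id (mem_erase.2 ⟨hab.symm, hb⟩)]
  exact add_assoc a b _

theorem card_mergeParts (ha : a ∈ S) (hb : b ∈ S) (hab : a ≠ b) (hu : a + b ∉ S) :
    (mergeParts S a b).card + 1 = S.card := by
  have hu' : a + b ∉ (S.erase a).erase b := fun h => hu (mem_of_mem_erase (mem_of_mem_erase h))
  rw [mergeParts, card_insert_of_notMem hu', card_erase_add_one (mem_erase.2 ⟨hab.symm, hb⟩),
    card_erase_add_one ha]

theorem mergeParts_splitPart (ha : a ∉ S) (hb : b ∉ S) (hab : a ≠ b) (hu : a + b ∈ S) :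
    mergeParts (splitPart S a b) a b = S := by
  have hb' : b ∉ S.erase (a + b) := fun h => hb (mem_of_mem_erase h)
  have ha' : a ∉ insert b (S.erase (a + b)) := by simp [hab, ha]
  rw [mergeParts, splitPart, erase_insert ha', erase_insert hb', insert_erase hu]

theorem splitPart_mergeParts (ha : a ∈ S) (hb : b ∈ S) (hab : a ≠ b) (hu : a + b ∉ S) :
    splitPart (mergeParts S a b) a b = S := by
  have hu' : a + b ∉ (S.erase a).erase b := fun h => hu (mem_of_mem_erase (mem_of_mem_erase h))
  rw [mergeParts, splitPart, erase_insert hu', insert_erase (mem_erase.2 ⟨hab.symm, hb⟩),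
    insert_erase ha]

end SplitMerge

def HasOddMin (S : Finset ℕ) : Prop := ∃ m ∈ S, Odd m ∧ ∀ x ∈ S, m ≤ x

theorem mem_Pdo {n : ℕ} {S : Finset ℕ} : S ∈ Pdo n ↔ S.sum id = n ∧ HasOddMin S := by
  rw [Pdo, mem_filter, mem_powerset, HasOddMin, and_iff_right_iff_imp]
  rintro ⟨rfl, -⟩ x hx
  exact mem_range_succ_iff.2 (single_le_sum (f := id) (fun _ _ => Nat.zero_le _) hx)

theorem HasOddMin.zero_notMem {S : Finset ℕ} (h : HasOddMin S) : 0 ∉ S := by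
  obtain ⟨m, -, hm, hmin⟩ := h
  intro h0
  exact hm.pos.ne' (Nat.le_zero.1 (hmin 0 h0))

theorem hasOddMin_of_one_mem {S : Finset ℕ} (h1 : 1 ∈ S) (h0 : 0 ∉ S) : HasOddMin S :=
  ⟨1, h1, odd_one, fun _ hx => Nat.one_le_iff_ne_zero.2 fun h => h0 (h ▸ hx)⟩

def oddStair (k : ℕ) : Finset ℕ := (range k).image (fun i => 2 * i + 1)

theorem mem_oddStair {k z : ℕ} : z ∈ oddStair k ↔ z % 2 = 1 ∧ z < 2 * k := by
  simp only [oddStair, mem_image, mem_range]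
  constructor
  · rintro ⟨i, hi, rfl⟩; omega
  · intro h; exact ⟨z / 2, by omega, by omega⟩

theorem two_mul_add_one_injective : Function.Injective (fun i : ℕ => 2 * i + 1) :=
  fun _ _ h => by simp only at h; omega

theorem sum_oddStair (k : ℕ) : (oddStair k).sum id = k * k := by
  rw [oddStair, sum_image fun _ _ _ _ h => two_mul_add_one_injective h]
  induction k with
  | zero => rfl
  | succ k ih => rw [sum_range_succ, ih]; simp only [id]; ring

theorem card_oddStair (k : ℕ) : (oddStair k).card = k := by
  rw [oddStair, card_image_of_injective _ two_mul_add_one_injective, card_range]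

theorem exists_two_mul_add_one_notMem (S : Finset ℕ) : ∃ j, 2 * j + 1 ∉ S :=
  ⟨S.sum id, fun h => by
    have := single_le_sum (f := id) (fun _ _ => Nat.zero_le _) h; simp only [id] at this; omega⟩

def oddStairLen (S : Finset ℕ) : ℕ := Nat.find (exists_two_mul_add_one_notMem S)

section OddStairLen

variable {S : Finset ℕ} {k : ℕ}

theorem two_mul_oddStairLen_add_one_notMem : 2 * oddStairLen S + 1 ∉ S :=
  Nat.find_spec (exists_two_mul_add_one_notMem S)

theorem ne_two_mul_oddStairLen_add_one {z : ℕ} (hz : z ∈ S) : z ≠ 2 * oddStairLen S + 1 :=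
  fun h => two_mul_oddStairLen_add_one_notMem (h ▸ hz)

theorem mem_of_odd_lt_oddStairLen {z : ℕ} (hz : z % 2 = 1) (hlt : z < 2 * oddStairLen S) :
    z ∈ S := by
  have := not_not.1
    (Nat.find_min (exists_two_mul_add_one_notMem S) (show z / 2 < oddStairLen S by omega))
  rwa [show 2 * (z / 2) + 1 = z by omega] at this

theorem oddStairLen_eq (hk : 2 * k + 1 ∉ S) (hlt : ∀ z, z % 2 = 1 → z < 2 * k → z ∈ S) :
    oddStairLen S = k :=
  le_antisymm (Nat.find_le hk)
    (not_lt.1 fun h => two_mul_oddStairLen_add_one_notMem (hlt _ (by omega) (by omega)))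

theorem oddStairLen_oddStair : oddStairLen (oddStair k) = k :=
  oddStairLen_eq (by simp [mem_oddStair]) fun _ hz hlt => mem_oddStair.2 ⟨hz, hlt⟩

end OddStairLen

def oddsAbove (S : Finset ℕ) : Finset ℕ :=
  S.filter (fun x => x % 2 = 1 ∧ 2 * oddStairLen S + 1 < x)

def evenParts (S : Finset ℕ) : Finset ℕ := S.filter (fun x => x % 2 = 0)

def Splittable (S : Finset ℕ) : Prop :=
  ∃ u ∈ oddsAbove S, ∀ e ∈ evenParts S, u < e + (2 * oddStairLen S + 1)

theorem Splittable.nonempty {S : Finset ℕ} (h : Splittable S) : (oddsAbove S).Nonempty :=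
  let ⟨u, hu, _⟩ := h; ⟨u, hu⟩

instance : DecidablePred Splittable := fun _ => by unfold Splittable; infer_instance

def stairToggle (S : Finset ℕ) : Finset ℕ :=
  if h : Splittable S then
    splitPart S ((oddsAbove S).min' h.nonempty - (2 * oddStairLen S + 1)) (2 * oddStairLen S + 1)
  else if he : (evenParts S).Nonempty then
    mergeParts S ((evenParts S).min' he) (2 * oddStairLen S - 1)
  else S

section StairToggle

variable {S : Finset ℕ}

theorem stairToggle_of_splittable (hs : Splittable S) {x : ℕ}
    (hu : IsLeast (oddsAbove S : Set ℕ) (x + (2 * oddStairLen S + 1))) :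
    stairToggle S = splitPart S x (2 * oddStairLen S + 1) := by
  rw [stairToggle, dif_pos hs, (isLeast_min' _ _).unique hu, Nat.add_sub_cancel]

theorem stairToggle_of_not_splittable (hs : ¬Splittable S) {e : ℕ}
    (he : IsLeast (evenParts S : Set ℕ) e) :
    stairToggle S = mergeParts S e (2 * oddStairLen S - 1) := by
  rw [stairToggle, dif_neg hs, dif_pos ⟨e, he.1⟩]
  congr 1
  exact (isLeast_min' _ _).unique he

theorem stairToggle_oddStair (k : ℕ) : stairToggle (oddStair k) = oddStair k := by
  have hodd : oddsAbove (oddStair k) = ∅ := by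
    refine filter_eq_empty_iff.2 fun z hz => ?_
    rw [oddStairLen_oddStair]
    have := mem_oddStair.1 hz
    omega
  have heven : evenParts (oddStair k) = ∅ := by
    refine filter_eq_empty_iff.2 fun z hz => ?_
    have := mem_oddStair.1 hz
    omega
  rw [stairToggle, dif_neg fun h => by simpa [hodd] using h.nonempty, dif_neg (by simp [heven])]

theorem evenParts_nonempty (hs : ¬Splittable S) (hne : S ≠ oddStair (oddStairLen S)) :
    (evenParts S).Nonempty := by
  by_contra he
  rw [not_nonempty_iff_eq_empty] at he
  refine hne (ext fun z => ⟨fun hz => ?_, fun hz => ?_⟩)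
  · have hodd : z % 2 = 1 := by
      by_contra h
      exact (filter_eq_empty_iff.1 he) hz (by omega)
    have hlt : ¬ 2 * oddStairLen S + 1 < z := fun h =>
      hs ⟨z, mem_filter.2 ⟨hz, hodd, h⟩, by simp [he]⟩
    have : z ≠ 2 * oddStairLen S + 1 := ne_two_mul_oddStairLen_add_one hz
    exact mem_oddStair.2 ⟨hodd, by omega⟩
  · obtain ⟨hodd, hlt⟩ := mem_oddStair.1 hz
    exact mem_of_odd_lt_oddStairLen hodd hlt

theorem oddStairLen_ne_zero (hS : HasOddMin S) {e : ℕ} (he : e ∈ evenParts S)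
    (hgap : ∀ v ∈ oddsAbove S, e + (2 * oddStairLen S + 1) ≤ v) : oddStairLen S ≠ 0 := by
  intro hk
  obtain ⟨m, hmS, hm, hmin⟩ := hS
  have hm1 := ne_two_mul_oddStairLen_add_one hmS
  have := hgap m (mem_filter.2 ⟨hmS, Nat.odd_iff.1 hm, by have := hm.pos; omega⟩)
  have := hmin e (mem_filter.1 he).1
  omega

end StairToggle

section Split

variable {S : Finset ℕ} {x : ℕ}

theorem oddStairLen_splitPart (hu : IsLeast (oddsAbove S : Set ℕ) (x + (2 * oddStairLen S + 1))) :
    oddStairLen (splitPart S x (2 * oddStairLen S + 1)) = oddStairLen S + 1 := by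
  obtain ⟨huS, hodd, hgt⟩ := mem_filter.1 hu.1
  refine oddStairLen_eq ?_ fun z hz hlt => mem_splitPart.2 ?_
  · rw [mem_splitPart]
    rintro (h | h | ⟨hne, h⟩)
    · omega
    · omega
    · have : x + (2 * oddStairLen S + 1) ≤ _ := hu.2 (mem_filter.2 ⟨h, by omega, by omega⟩)
      omega
  · by_cases h : z = 2 * oddStairLen S + 1
    · exact Or.inr (Or.inl h)
    · exact Or.inr (Or.inr ⟨by omega, mem_of_odd_lt_oddStairLen hz (by omega)⟩)

theorem isLeast_evenParts_splitPart
    (hu : IsLeast (oddsAbove S : Set ℕ) (x + (2 * oddStairLen S + 1)))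
    (hx : ∀ e ∈ evenParts S, x < e) :
    IsLeast (evenParts (splitPart S x (2 * oddStairLen S + 1)) : Set ℕ) x := by
  have hodd := (mem_filter.1 hu.1).2.1
  refine ⟨mem_filter.2 ⟨mem_splitPart.2 (Or.inl rfl), by omega⟩, fun z hz => ?_⟩
  obtain ⟨hzT, hz⟩ := mem_filter.1 hz
  rcases mem_splitPart.1 hzT with rfl | rfl | ⟨-, hzS⟩
  · exact le_rfl
  · omega
  · exact (hx z (mem_filter.2 ⟨hzS, hz⟩)).le

theorem not_splittable_splitPart
    (hu : IsLeast (oddsAbove S : Set ℕ) (x + (2 * oddStairLen S + 1)))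
    (hx : ∀ e ∈ evenParts S, x < e) :
    ¬Splittable (splitPart S x (2 * oddStairLen S + 1)) := by
  have hodd := (mem_filter.1 hu.1).2.1
  rintro ⟨v, hv, hlt⟩
  obtain ⟨hvT, hv, hvgt⟩ := mem_filter.1 hv
  have hxv := hlt x (isLeast_evenParts_splitPart hu hx).1
  rw [oddStairLen_splitPart hu] at hvgt hxv
  rcases mem_splitPart.1 hvT with rfl | rfl | ⟨hne, hvS⟩
  · omega
  · omega
  · have := hu.2 (mem_filter.2 ⟨hvS, hv, by omega⟩)
    omega

theorem hasOddMin_splitPart (hu : IsLeast (oddsAbove S : Set ℕ) (x + (2 * oddStairLen S + 1)))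
    (h0 : 0 ∉ S) : HasOddMin (splitPart S x (2 * oddStairLen S + 1)) := by
  have hgt := (mem_filter.1 hu.1).2.2
  refine hasOddMin_of_one_mem (mem_splitPart.2 ?_) ?_
  · by_cases hk : oddStairLen S = 0
    · exact Or.inr (Or.inl (by omega))
    · exact Or.inr (Or.inr ⟨by omega, mem_of_odd_lt_oddStairLen rfl (by omega)⟩)
  · rw [mem_splitPart]
    rintro (h | h | ⟨-, h⟩)
    · omega
    · omega
    · exact h0 h

theorem splitPart_spec (hu : IsLeast (oddsAbove S : Set ℕ) (x + (2 * oddStairLen S + 1)))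
    (hx : ∀ e ∈ evenParts S, x < e) (h0 : 0 ∉ S) :
    HasOddMin (splitPart S x (2 * oddStairLen S + 1)) ∧
      (splitPart S x (2 * oddStairLen S + 1)).sum id = S.sum id ∧
      (splitPart S x (2 * oddStairLen S + 1)).card = S.card + 1 ∧
      stairToggle (splitPart S x (2 * oddStairLen S + 1)) = S := by
  obtain ⟨huS, hodd, -⟩ := mem_filter.1 hu.1
  have hxS : x ∉ S := fun h => (hx x (mem_filter.2 ⟨h, by omega⟩)).false
  have hx1 : x ≠ 2 * oddStairLen S + 1 := by omega
  have hkS := two_mul_oddStairLen_add_one_notMem (S := S)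
  refine ⟨hasOddMin_splitPart hu h0, sum_splitPart hxS hkS hx1 huS,
    card_splitPart hxS hkS hx1 huS, ?_⟩
  rw [stairToggle_of_not_splittable (not_splittable_splitPart hu hx)
    (isLeast_evenParts_splitPart hu hx), oddStairLen_splitPart hu,
    show 2 * (oddStairLen S + 1) - 1 = 2 * oddStairLen S + 1 by omega]
  exact mergeParts_splitPart hxS hkS hx1 huS

end Split

section Merge

variable {S : Finset ℕ} {e j : ℕ}

theorem add_notMem_of_gap (hk : oddStairLen S = j + 1)
    (hgap : ∀ v ∈ oddsAbove S, e + (2 * oddStairLen S + 1) ≤ v)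
    (he : e % 2 = 0) (he0 : e ≠ 0) :
    e + (2 * j + 1) ∉ S := by
  intro hy
  have hne : e + (2 * j + 1) ≠ 2 * oddStairLen S + 1 := ne_two_mul_oddStairLen_add_one hy
  have := hgap _ (mem_filter.2 ⟨hy, by omega, by omega⟩)
  omega

theorem oddStairLen_mergeParts (hk : oddStairLen S = j + 1) (he0 : e ≠ 0) (he : e % 2 = 0) :
    oddStairLen (mergeParts S e (2 * j + 1)) = j := by
  refine oddStairLen_eq ?_ fun z hz hlt => mem_mergeParts.2 (Or.inr ⟨by omega, by omega, ?_⟩)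
  · rw [mem_mergeParts]
    omega
  · exact mem_of_odd_lt_oddStairLen hz (by omega)

theorem isLeast_oddsAbove_mergeParts (hk : oddStairLen S = j + 1)
    (he : IsLeast (evenParts S : Set ℕ) e) (h0 : 0 ∉ S)
    (hgap : ∀ v ∈ oddsAbove S, e + (2 * oddStairLen S + 1) ≤ v) :
    IsLeast (oddsAbove (mergeParts S e (2 * j + 1)) : Set ℕ) (e + (2 * j + 1)) := by
  obtain ⟨heS, heven⟩ := mem_filter.1 he.1
  have he0 : e ≠ 0 := fun h => h0 (h ▸ heS)
  have hlen := oddStairLen_mergeParts hk he0 heven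
  refine ⟨mem_filter.2 ⟨mem_mergeParts.2 (Or.inl rfl), by omega, by omega⟩, fun v hv => ?_⟩
  obtain ⟨hvT, hv, hvgt⟩ := mem_filter.1 hv
  rcases mem_mergeParts.1 hvT with rfl | ⟨-, -, hvS⟩
  · exact le_rfl
  · have hne : v ≠ 2 * oddStairLen S + 1 := ne_two_mul_oddStairLen_add_one hvS
    have := hgap v (mem_filter.2 ⟨hvS, hv, by omega⟩)
    omega

theorem splittable_mergeParts (hk : oddStairLen S = j + 1)
    (he : IsLeast (evenParts S : Set ℕ) e) (h0 : 0 ∉ S)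
    (hgap : ∀ v ∈ oddsAbove S, e + (2 * oddStairLen S + 1) ≤ v) :
    Splittable (mergeParts S e (2 * j + 1)) := by
  obtain ⟨heS, heven⟩ := mem_filter.1 he.1
  have he0 : e ≠ 0 := fun h => h0 (h ▸ heS)
  refine ⟨_, (isLeast_oddsAbove_mergeParts hk he h0 hgap).1, fun z hz => ?_⟩
  obtain ⟨hzT, hz⟩ := mem_filter.1 hz
  rw [oddStairLen_mergeParts hk he0 heven]
  rcases mem_mergeParts.1 hzT with rfl | ⟨-, hze, hzS⟩
  · omega
  · have := he.2 (mem_filter.2 ⟨hzS, hz⟩)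
    omega

theorem hasOddMin_mergeParts (hk : oddStairLen S = j + 1)
    (he : IsLeast (evenParts S : Set ℕ) e) (h0 : 0 ∉ S)
    (hgap : ∀ v ∈ oddsAbove S, e + (2 * oddStairLen S + 1) ≤ v) :
    HasOddMin (mergeParts S e (2 * j + 1)) := by
  obtain ⟨heS, heven⟩ := mem_filter.1 he.1
  have he0 : e ≠ 0 := fun h => h0 (h ▸ heS)
  rcases Nat.eq_zero_or_pos j with rfl | hj
  · -- `1` has been merged away, and `e + 1` is now the least part
    refine ⟨e + 1, mem_mergeParts.2 (Or.inl rfl), by rw [Nat.odd_iff]; omega, fun z hz => ?_⟩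
    rcases mem_mergeParts.1 hz with rfl | ⟨hz1, hze, hzS⟩
    · exact le_rfl
    · have hz3 : z ≠ 2 * oddStairLen S + 1 := ne_two_mul_oddStairLen_add_one hzS
      rcases Nat.mod_two_eq_zero_or_one z with hz | hz
      · have := he.2 (mem_filter.2 ⟨hzS, hz⟩)
        omega
      · have := hgap z (mem_filter.2 ⟨hzS, hz, by omega⟩)
        omega
  · refine hasOddMin_of_one_mem (mem_mergeParts.2 (Or.inr ⟨by omega, by omega, ?_⟩)) ?_
    · exact mem_of_odd_lt_oddStairLen rfl (by omega)
    · rw [mem_mergeParts]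
      rintro (h | ⟨-, -, h⟩)
      · omega
      · exact h0 h

theorem mergeParts_spec (hk : oddStairLen S = j + 1)
    (he : IsLeast (evenParts S : Set ℕ) e) (h0 : 0 ∉ S)
    (hgap : ∀ v ∈ oddsAbove S, e + (2 * oddStairLen S + 1) ≤ v) :
    HasOddMin (mergeParts S e (2 * j + 1)) ∧
      (mergeParts S e (2 * j + 1)).sum id = S.sum id ∧
      (mergeParts S e (2 * j + 1)).card + 1 = S.card ∧
      stairToggle (mergeParts S e (2 * j + 1)) = S := by
  obtain ⟨heS, heven⟩ := mem_filter.1 he.1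
  have he0 : e ≠ 0 := fun h => h0 (h ▸ heS)
  have hjS : 2 * j + 1 ∈ S := mem_of_odd_lt_oddStairLen (by omega) (by omega)
  have hej : e ≠ 2 * j + 1 := by omega
  have hyS := add_notMem_of_gap hk hgap heven he0
  refine ⟨hasOddMin_mergeParts hk he h0 hgap, sum_mergeParts heS hjS hej hyS,
    card_mergeParts heS hjS hej hyS, ?_⟩
  have hu : IsLeast (oddsAbove (mergeParts S e (2 * j + 1)) : Set ℕ)
      (e + (2 * oddStairLen (mergeParts S e (2 * j + 1)) + 1)) := by
    rw [oddStairLen_mergeParts hk he0 heven]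
    exact isLeast_oddsAbove_mergeParts hk he h0 hgap
  rw [stairToggle_of_splittable (splittable_mergeParts hk he h0 hgap) hu,
    oddStairLen_mergeParts hk he0 heven]
  exact splitPart_mergeParts heS hjS hej hyS

end Merge

theorem stairToggle_spec {S : Finset ℕ} (hS : HasOddMin S)
    (hne : S ≠ oddStair (oddStairLen S)) :
    HasOddMin (stairToggle S) ∧ (stairToggle S).sum id = S.sum id ∧
      (-1 : ℤ) ^ (stairToggle S).card = -(-1) ^ S.card ∧ stairToggle (stairToggle S) = S := by
  have h0 := hS.zero_notMem
  by_cases hs : Splittable S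
  · obtain ⟨x, hu⟩ : ∃ x, IsLeast (oddsAbove S : Set ℕ) (x + (2 * oddStairLen S + 1)) :=
      ⟨_, (Nat.sub_add_cancel (mem_filter.1 (min'_mem _ hs.nonempty)).2.2.le).symm ▸
        isLeast_min' _ hs.nonempty⟩
    have hx : ∀ e ∈ evenParts S, x < e := fun e he => by
      obtain ⟨v, hv, hlt⟩ := hs
      have := hu.2 hv
      have := hlt e he
      omega
    obtain ⟨hT, hsum, hcard, hinv⟩ := splitPart_spec hu hx h0
    rw [stairToggle_of_splittable hs hu, hcard, pow_succ, mul_neg_one]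
    exact ⟨hT, hsum, rfl, hinv⟩
  · obtain ⟨e, he⟩ : ∃ e, IsLeast (evenParts S : Set ℕ) e :=
      ⟨_, isLeast_min' _ (evenParts_nonempty hs hne)⟩
    have hblocked :
        ∀ v ∈ oddsAbove S, ∃ e' ∈ evenParts S, e' + (2 * oddStairLen S + 1) ≤ v := by
      simpa [Splittable] using hs
    have hgap : ∀ v ∈ oddsAbove S, e + (2 * oddStairLen S + 1) ≤ v := fun v hv => by
      obtain ⟨e', he', hle⟩ := hblocked v hv
      have := he.2 he'
      omega
    obtain ⟨j, hk⟩ := Nat.exists_eq_succ_of_ne_zero (oddStairLen_ne_zero hS he.1 hgap)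
    obtain ⟨hT, hsum, hcard, hinv⟩ := mergeParts_spec hk he h0 hgap
    rw [stairToggle_of_not_splittable hs he, hk, show 2 * (j + 1) - 1 = 2 * j + 1 by omega,
      ← hcard, pow_succ, mul_neg_one, neg_neg]
    exact ⟨hT, hsum, rfl, hinv⟩

theorem eq_oddStair_of_stairToggle_eq {S : Finset ℕ} {k : ℕ} (h : stairToggle S = oddStair k)
    (hinv : stairToggle (stairToggle S) = S) : S = oddStair (oddStairLen S) := by
  rw [← hinv, h, stairToggle_oddStair, oddStairLen_oddStair]

theorem sum_filter_not_oddStair (n : ℕ) :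
    ∑ S ∈ (Pdo n).filter (fun S => ¬S = oddStair (oddStairLen S)),
      (-1 : ℤ) ^ S.card = 0 := by
  have spec : ∀ S ∈ (Pdo n).filter (fun S => ¬S = oddStair (oddStairLen S)), _ :=
    fun S hS => stairToggle_spec (mem_Pdo.1 (mem_filter.1 hS).1).2 (mem_filter.1 hS).2
  refine sum_involution (fun S _ => stairToggle S) (fun S hS => ?_) (fun S hS _ hfix => ?_)
    (fun S hS => ?_) (fun S hS => (spec S hS).2.2.2)
  · rw [(spec S hS).2.2.1, add_neg_cancel]
  · have h := (spec S hS).2.2.1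
    rw [hfix] at h
    exact pow_ne_zero _ (by norm_num : (-1 : ℤ) ≠ 0) (by linarith)
  · obtain ⟨hT, hsum, -, hinv⟩ := spec S hS
    obtain ⟨hP, hne⟩ := mem_filter.1 hS
    refine mem_filter.2 ⟨mem_Pdo.2 ⟨hsum.trans (mem_Pdo.1 hP).1, hT⟩, fun h => ?_⟩
    exact hne (eq_oddStair_of_stairToggle_eq h hinv)

theorem filter_Pdo_eq_oddStair {n : ℕ} (hn : 1 ≤ n) :
    (Pdo n).filter (fun S => S = oddStair (oddStairLen S)) =
      if IsSquare n then {oddStair (Nat.sqrt n)} else ∅ := by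
  ext S
  have hsum : S = oddStair (oddStairLen S) → S.sum id = oddStairLen S * oddStairLen S :=
    fun h => (congrArg (fun T => T.sum id) h).trans (sum_oddStair _)
  simp only [mem_filter, mem_Pdo]
  split_ifs with hsq
  · obtain ⟨j, rfl⟩ := hsq
    rw [mem_singleton, Nat.sqrt_eq]
    constructor
    · rintro ⟨⟨hS, -⟩, h⟩
      rw [h, Nat.mul_self_inj.1 ((hsum h).symm.trans hS)]
    · rintro rfl
      refine ⟨⟨sum_oddStair j, hasOddMin_of_one_mem ?_ ?_⟩, by rw [oddStairLen_oddStair]⟩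
      · exact mem_oddStair.2 ⟨rfl, by nlinarith⟩
      · simp [mem_oddStair]
  · simp only [notMem_empty, iff_false, not_and]
    exact fun ⟨hS, _⟩ h => hsq ⟨_, hS.symm.trans (hsum h)⟩

open scoped Classical in
theorem Re_sub_Ro (n : ℕ) (hn : 1 ≤ n) :
    (((Pdo n).filter (fun S => Even S.card)).card : ℤ) -
      (((Pdo n).filter (fun S => Odd S.card)).card : ℤ) =
      if IsSquare n then (-1 : ℤ) ^ Nat.sqrt n else 0 := by
  rw [card_filter_even_sub_card_filter_odd (Pdo n) card,
    ← sum_filter_add_sum_filter_not (Pdo n) (fun S => S = oddStair (oddStairLen S)),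
    sum_filter_not_oddStair, add_zero, filter_Pdo_eq_oddStair hn]
  split_ifs <;> simp [card_oddStair]
end

section
/- As formal power series in q and a, Ramanujan's partial theta identity holds: 1 + ∑_{k≥1} (-q;q)_{k-1} (-a)^k q^{k(k+1)/2} / (aq^2;q^2)_k = ∑_{k≥0} (-a)^k q^{k^2}. -/
/-!
Write `L(a)` for the left side and `θ(a) = ∑ (-a)^k q^{k²}`. Both satisfy the functional
equation `f(a) = 1 - a q f(a q²)`, which determines `f` modulo `q^{K+1}` from `f` modulo `q^K`;
hence `L = θ`. For `θ` the equation is a shift of the summation index. For `L` it comes from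
telescoping: with `t_K(a) = -(-q;q)_K (-a)^{K+2} q^{(K+2)(K+3)/2} / (a q²;q²)_{K+1}`, the summand
of index `K + 2` of `L(a)` plus `a q` times the summand of index `K + 1` of `L(a q²)` equals
`t_{K+1}(a) - t_K(a)`, and `t_K` has order at least `K + 2` in `q`.
-/

open Finset PowerSeries

namespace RamanujanPartialTheta

variable {A : Type*} [CommRing A]

lemma add_one_mul_add_two_div_two (n : ℕ) :
    (n + 1) * (n + 2) / 2 = n * (n + 1) / 2 + (n + 1) := by
  rw [show (n + 1) * (n + 2) = n * (n + 1) + 2 * (n + 1) by ring,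
    Nat.add_mul_div_left _ _ two_pos]

/-- `(-q; q)_k`. -/
noncomputable def negQPochhammer (k : ℕ) : A⟦X⟧ := ∏ j ∈ range k, (1 + X ^ (j + 1))

/-- `(x q²; q²)_k`. -/
noncomputable def qSqPochhammer (x : A⟦X⟧) (k : ℕ) : A⟦X⟧ :=
  ∏ j ∈ range k, (1 - x * X ^ (2 * j + 2))

/-- The summand of index `m + 1` of the left side, at `a = x`. -/
noncomputable def summand (x : A⟦X⟧) (m : ℕ) : A⟦X⟧ :=
  negQPochhammer m * (-x) ^ (m + 1) * X ^ ((m + 1) * (m + 2) / 2) *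
    Ring.inverse (qSqPochhammer x (m + 1))

noncomputable def tail (x : A⟦X⟧) (K : ℕ) : A⟦X⟧ :=
  -(negQPochhammer K * (-x) ^ (K + 2) * X ^ ((K + 2) * (K + 3) / 2)) *
    Ring.inverse (qSqPochhammer x (K + 1))

noncomputable def lhsPartialSum (x : A⟦X⟧) (K : ℕ) : A⟦X⟧ :=
  1 + ∑ m ∈ range K, summand x m

noncomputable def thetaPartialSum (x : A⟦X⟧) (K : ℕ) : A⟦X⟧ :=
  ∑ m ∈ range (K + 1), (-x) ^ m * X ^ (m ^ 2)

lemma negQPochhammer_succ (k : ℕ) :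
    negQPochhammer (A := A) (k + 1) = negQPochhammer k * (1 + X ^ (k + 1)) :=
  prod_range_succ _ _

lemma qSqPochhammer_succ (x : A⟦X⟧) (k : ℕ) :
    qSqPochhammer x (k + 1) = qSqPochhammer x k * (1 - x * X ^ (2 * k + 2)) :=
  prod_range_succ _ _

lemma qSqPochhammer_succ' (x : A⟦X⟧) (k : ℕ) :
    qSqPochhammer x (k + 1) = (1 - x * X ^ 2) * qSqPochhammer (x * X ^ 2) k := by
  rw [qSqPochhammer, prod_range_succ', mul_comm, qSqPochhammer]
  congr 1
  exact prod_congr rfl fun j _ ↦ by ring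

lemma isUnit_qSqPochhammer (x : A⟦X⟧) (k : ℕ) : IsUnit (qSqPochhammer x k) := by
  refine isUnit_iff_constantCoeff.mpr ?_
  simp [qSqPochhammer, map_prod]

lemma summand_mul_qSqPochhammer (x : A⟦X⟧) (m : ℕ) :
    summand x m * qSqPochhammer x (m + 1) =
      negQPochhammer m * (-x) ^ (m + 1) * X ^ ((m + 1) * (m + 2) / 2) :=
  Ring.inverse_mul_cancel_right _ _ (isUnit_qSqPochhammer x _)

lemma tail_mul_qSqPochhammer (x : A⟦X⟧) (K : ℕ) :
    tail x K * qSqPochhammer x (K + 1) =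
      -(negQPochhammer K * (-x) ^ (K + 2) * X ^ ((K + 2) * (K + 3) / 2)) :=
  Ring.inverse_mul_cancel_right _ _ (isUnit_qSqPochhammer x _)

lemma summand_zero_add (x : A⟦X⟧) : summand x 0 + x * X = tail x 0 := by
  refine (isUnit_qSqPochhammer x 1).mul_right_cancel ?_
  rw [add_mul, summand_mul_qSqPochhammer, tail_mul_qSqPochhammer]
  norm_num [qSqPochhammer, negQPochhammer]
  ring

lemma summand_succ_add (x : A⟦X⟧) (m : ℕ) :
    summand x (m + 1) + x * X * summand (x * X ^ 2) m = tail x (m + 1) - tail x m := by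
  refine (isUnit_qSqPochhammer x (m + 2)).mul_right_cancel ?_
  have h₁ := summand_mul_qSqPochhammer x (m + 1)
  have h₂ := summand_mul_qSqPochhammer (x * X ^ 2) m
  have h₃ := tail_mul_qSqPochhammer x (m + 1)
  have h₄ := tail_mul_qSqPochhammer x m
  have hT₁ := add_one_mul_add_two_div_two (m + 1)
  have hT₂ := add_one_mul_add_two_div_two (m + 2)
  rw [hT₁] at h₁ h₄
  rw [hT₂, hT₁] at h₃
  rw [negQPochhammer_succ] at h₁ h₃
  linear_combination h₁ + x * X * (1 - x * X ^ 2) * h₂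
    + x * X * summand (x * X ^ 2) m * qSqPochhammer_succ' x (m + 1)
    - h₃ + (1 - x * X ^ (2 * (m + 1) + 2)) * h₄ + tail x m * qSqPochhammer_succ x (m + 1)

lemma lhsPartialSum_succ (x : A⟦X⟧) (K : ℕ) :
    lhsPartialSum x (K + 1) = 1 - x * X * lhsPartialSum (x * X ^ 2) K + tail x K := by
  induction K with
  | zero => simp [lhsPartialSum, ← summand_zero_add]
  | succ K ih =>
    simp only [lhsPartialSum, sum_range_succ] at ih ⊢
    linear_combination ih + summand_succ_add x K

lemma thetaPartialSum_succ (x : A⟦X⟧) (K : ℕ) :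
    thetaPartialSum x (K + 1) = 1 - x * X * thetaPartialSum (x * X ^ 2) K := by
  rw [thetaPartialSum, thetaPartialSum, sum_range_succ', mul_sum, sub_eq_add_neg,
    ← sum_neg_distrib, add_comm 1]
  congr 1
  · exact sum_congr rfl fun m _ ↦ by ring
  · simp

lemma X_pow_dvd_tail (x : A⟦X⟧) (K : ℕ) : X ^ (K + 2) ∣ tail x K := by
  have hle : K + 2 ≤ (K + 2) * (K + 3) / 2 := by
    rw [add_one_mul_add_two_div_two (K + 1)]
    omega
  refine Dvd.dvd.mul_right (Dvd.dvd.neg_right ?_) _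
  exact (pow_dvd_pow X hle).mul_left _

lemma X_pow_dvd_lhsPartialSum_sub_thetaPartialSum (x : A⟦X⟧) (K : ℕ) :
    X ^ (K + 1) ∣ lhsPartialSum x K - thetaPartialSum x K := by
  induction K generalizing x with
  | zero => simp [lhsPartialSum, thetaPartialSum]
  | succ K ih =>
    have h : X ^ (K + 2) ∣
        x * X * (lhsPartialSum (x * X ^ 2) K - thetaPartialSum (x * X ^ 2) K) := by
      rw [pow_succ', mul_comm x, mul_assoc]
      exact mul_dvd_mul_left X ((ih _).mul_left x)
    rw [lhsPartialSum_succ, thetaPartialSum_succ,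
      show ∀ a b c d : A⟦X⟧, 1 - a * b + c - (1 - a * d) = c - a * (b - d) by intros; ring]
    exact dvd_sub (X_pow_dvd_tail x K) h

end RamanujanPartialTheta

/-- Ramanujan's partial theta identity, as an identity of formal power series in `q`
with coefficients in `ℤ[a]`.  Since every term of index `k > N` has order `> N`, the
`N`-th coefficient of each side is computed from the displayed finite truncations. -/
theorem ramanujan_partial_theta (N : ℕ) :
    PowerSeries.coeff (R := Polynomial ℤ) N
      (1 + ∑ k ∈ Finset.Icc 1 N,
        (∏ j ∈ Finset.range (k - 1), (1 + PowerSeries.X ^ (j + 1))) *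
          (-(PowerSeries.C (R := Polynomial ℤ) Polynomial.X)) ^ k *
          PowerSeries.X ^ (k * (k + 1) / 2) *
          Ring.inverse (∏ j ∈ Finset.range k,
            (1 - PowerSeries.C (R := Polynomial ℤ) Polynomial.X * PowerSeries.X ^ (2 * j + 2)))) =
    PowerSeries.coeff (R := Polynomial ℤ) N
      (∑ k ∈ Finset.range (N + 1),
        (-(PowerSeries.C (R := Polynomial ℤ) Polynomial.X)) ^ k * PowerSeries.X ^ (k ^ 2)) := by
  rw [← Finset.Ico_add_one_right_eq_Icc, Finset.sum_Ico_eq_sum_range, Nat.add_sub_cancel,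
    ← sub_eq_zero, ← map_sub]
  convert X_pow_dvd_iff.mp
    (RamanujanPartialTheta.X_pow_dvd_lhsPartialSum_sub_thetaPartialSum (C Polynomial.X) N) N
    (lt_add_one N) using 4
  · refine congrArg (1 + ·) (Finset.sum_congr rfl fun m _ ↦ ?_)
    rw [add_comm 1 m, Nat.add_sub_cancel]
    rfl
  · rfl
end

section
/- As formal power series in q and a, Andrews' partial theta identity holds: ∑_{n≥0} q^{2n} (q^{2n+2};q^2)_∞ (aq^{2n+1};q^2)_∞ = ∑_{k≥0} (-a)^k q^{k^2}. -/
/-!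
Write `F(a) = ∑_{n≥0} q^{2n} (q^{2n+2};q²)_∞ (aq^{2n+1};q²)_∞`. Since
`(x;q²)_∞ = (1 - x)(xq²;q²)_∞`, the products `T_n = (q^{2n};q²)_∞ (aq^{2n+1};q²)_∞` satisfy
`T_{n+1} - T_n = q^{2n}(q^{2n+2};q²)_∞ (aq^{2n+1};q²)_∞ + aq · q^{2n}(q^{2n+2};q²)_∞ (aq^{2n+3};q²)_∞`,
and summing over `n` (with `T_0 = 0`, `T_∞ = 1`) gives `F(a) + aq F(aq²) = 1`. Iterating,
`F(a) = ∑_{k<K} (-a)^k q^{k²} + (-a)^K q^{K²} F(aq^{2K})`. Modulo `q^M` all infinite products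
and sums may be truncated at `M` terms, and the remainder vanishes for `K = M`.
-/

open Finset

section QPoch

variable {R : Type*} [CommRing R]

/-- `(x; q²)_M`. -/
def qPochSq (q : R) (M : ℕ) (x : R) : R := ∏ j ∈ range M, (1 - x * q ^ (2 * j))

theorem qPochSq_mul_one_sub (q : R) (M : ℕ) (x : R) :
    qPochSq q M x * (1 - x * q ^ (2 * M)) = (1 - x) * qPochSq q M (x * q ^ 2) := by
  have hshift : qPochSq q M (x * q ^ 2) = ∏ j ∈ range M, (1 - x * q ^ (2 * (j + 1))) :=
    prod_congr rfl fun j _ => by ring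
  rw [qPochSq, ← prod_range_succ (fun j => 1 - x * q ^ (2 * j)), prod_range_succ', hshift]
  ring

variable {q : R} {M : ℕ}

theorem qPochSq_of_pow_eq_zero (hq : q ^ M = 0) (x : R) :
    qPochSq q M x = (1 - x) * qPochSq q M (x * q ^ 2) := by
  have : q ^ (2 * M) = 0 := pow_eq_zero_of_le (by omega) hq
  rw [← qPochSq_mul_one_sub, this, mul_zero, sub_zero, mul_one]

@[simp]
theorem qPochSq_zero (q : R) (M : ℕ) : qPochSq q M 0 = 1 := by
  simp [qPochSq]

theorem qPochSq_one_of_pow_eq_zero (hq : q ^ M = 0) : qPochSq q M 1 = 0 := by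
  rw [qPochSq_of_pow_eq_zero hq, sub_self, zero_mul]

end QPoch

section Andrews

variable {R : Type*} [CommRing R] (q : R) (M : ℕ)

/-- The left side of Andrews' identity, truncated to `M` terms and factors. -/
def andrewsSum (a : R) : R :=
  ∑ n ∈ range M, q ^ (2 * n) * qPochSq q M (q ^ (2 * n + 2)) * qPochSq q M (a * q ^ (2 * n + 1))

variable {q M}

theorem andrewsSum_add (hq : q ^ M = 0) (a : R) :
    andrewsSum q M a + a * q * andrewsSum q M (a * q ^ 2) = 1 := by
  set T : ℕ → R := fun n => qPochSq q M (q ^ (2 * n)) * qPochSq q M (a * q ^ (2 * n + 1))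
  have hstep : ∀ n, T (n + 1) - T n =
      q ^ (2 * n) * qPochSq q M (q ^ (2 * n + 2)) * qPochSq q M (a * q ^ (2 * n + 1)) +
        a * q * (q ^ (2 * n) * qPochSq q M (q ^ (2 * n + 2)) *
          qPochSq q M (a * q ^ 2 * q ^ (2 * n + 1))) := by
    intro n
    have hx : q ^ (2 * (n + 1)) = q ^ (2 * n + 2) := by ring
    have hy : a * q ^ (2 * (n + 1) + 1) = a * q ^ (2 * n + 1) * q ^ 2 := by ring
    have hy' : a * q ^ 2 * q ^ (2 * n + 1) = a * q ^ (2 * n + 1) * q ^ 2 := by ring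
    simp only [T, hx, hy, hy']
    rw [qPochSq_of_pow_eq_zero hq (q ^ (2 * n)), qPochSq_of_pow_eq_zero hq (a * q ^ (2 * n + 1)),
      ← pow_add]
    ring
  have hq2 : q ^ (2 * M) = 0 := pow_eq_zero_of_le (by omega) hq
  have hT0 : T 0 = 0 := by simp [T, qPochSq_one_of_pow_eq_zero hq]
  have hTM : T M = 1 := by simp [T, pow_succ, hq2]
  rw [andrewsSum, andrewsSum, mul_sum, ← sum_add_distrib, ← sum_congr rfl fun n _ => hstep n,
    sum_range_sub, hT0, hTM, sub_zero]

theorem andrewsSum_eq_sum_add (hq : q ^ M = 0) (a : R) (K : ℕ) :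
    andrewsSum q M a = ∑ k ∈ range K, (-a) ^ k * q ^ (k ^ 2) +
      (-a) ^ K * q ^ (K ^ 2) * andrewsSum q M (a * q ^ (2 * K)) := by
  induction K with
  | zero => simp
  | succ K ih =>
    have hrec := andrewsSum_add hq (a * q ^ (2 * K))
    rw [show a * q ^ (2 * K) * q ^ 2 = a * q ^ (2 * (K + 1)) by ring] at hrec
    rw [ih, sum_range_succ, eq_sub_of_add_eq hrec]
    ring

theorem andrewsSum_eq_partialTheta (hq : q ^ M = 0) (a : R) :
    andrewsSum q M a = ∑ k ∈ range M, (-a) ^ k * q ^ (k ^ 2) := by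
  rw [andrewsSum_eq_sum_add hq a M, pow_eq_zero_of_le (Nat.le_self_pow two_ne_zero M) hq,
    mul_zero, zero_mul, add_zero]

end Andrews

theorem PowerSeries.coeff_eq_of_mk_span_X_pow_eq {R : Type*} [CommRing R] {f g : PowerSeries R}
    {n i : ℕ} (hi : i < n) (h : Ideal.Quotient.mk (Ideal.span {PowerSeries.X ^ n}) f =
      Ideal.Quotient.mk (Ideal.span {PowerSeries.X ^ n}) g) :
    PowerSeries.coeff i f = PowerSeries.coeff i g := by
  rw [Ideal.Quotient.eq, Ideal.mem_span_singleton] at h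
  rw [← sub_eq_zero, ← map_sub]
  exact PowerSeries.X_pow_dvd_iff.mp h i hi

/-- Andrews' partial theta identity
`∑_{n≥0} q^{2n} (q^{2n+2};q²)_∞ (aq^{2n+1};q²)_∞ = ∑_{k≥0} (-a)^k q^{k²}`,
as an identity of formal power series in `q` over `ℤ[a]`.  Summands with `n > N` and
factors of the infinite products with index `j > N` have no effect on the `N`-th
coefficient, so that coefficient is computed from the displayed finite truncations. -/
theorem andrews_partial_theta (N : ℕ) :
    PowerSeries.coeff (R := Polynomial ℤ) N
      (∑ n ∈ Finset.range (N + 1),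
        PowerSeries.X ^ (2 * n) *
          (∏ j ∈ Finset.range (N + 1), (1 - PowerSeries.X ^ (2 * n + 2 + 2 * j))) *
          (∏ j ∈ Finset.range (N + 1),
            (1 - PowerSeries.C (R := Polynomial ℤ) Polynomial.X *
              PowerSeries.X ^ (2 * n + 1 + 2 * j)))) =
    PowerSeries.coeff (R := Polynomial ℤ) N
      (∑ k ∈ Finset.range (N + 1),
        (-(PowerSeries.C (R := Polynomial ℤ) Polynomial.X)) ^ k * PowerSeries.X ^ (k ^ 2)) := by
  set φ := Ideal.Quotient.mk (Ideal.span {(PowerSeries.X : PowerSeries (Polynomial ℤ)) ^ (N + 1)})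
  have hq : φ PowerSeries.X ^ (N + 1) = 0 := by
    rw [← map_pow, Ideal.Quotient.eq_zero_iff_mem]
    exact Ideal.mem_span_singleton_self _
  apply PowerSeries.coeff_eq_of_mk_span_X_pow_eq (Nat.lt_succ_self N)
  simpa [andrewsSum, qPochSq, pow_add, mul_assoc] using
    andrewsSum_eq_partialTheta hq (φ (PowerSeries.C Polynomial.X))
end

section
/- As formal power series in q and a: ∑_{n≥1} (-a) q^{2n-1} (q^{2n};q^2)_∞ (aq^{2n+1};q^2)_∞ = ∑_{n≥1} (-a)^n q^{n^2}. -/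
/-!
Write `p = q²`. Modulo `q ^ (N + 2)` the element `p` is nilpotent, and for `p ^ K = 0` the finite
product `(y; p)_K` behaves like the infinite one: `(y; p)_K = (1 - y) (yp; p)_K`, which forces
Euler's expansion `(y; p)_K = ∑ₘ (-y)ᵐ p^(m choose 2) / (p; p)ₘ`. Expanding `(aqpⁿ; p)_∞` this way,
the left side becomes `∑ₘ (-aq)ᵐ p^(m choose 2) / (p; p)ₘ · ∑_{n ≥ 1} p^(n(m+1)) (pⁿ; p)_∞`, and the
inner sum telescopes to `p^(m+1) (p; p)ₘ`. What remains is `q⁻¹ ∑ₘ (-a)^(m+1) q^((m+1)² + 1)`.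
-/

open Finset
open scoped Ring

def qPochhammer {S : Type*} [CommRing S] (y p : S) (K : ℕ) : S :=
  ∏ j ∈ range K, (1 - y * p ^ j)

theorem sum_Icc_one_shift {G : Type*} [AddCommGroup G] (f : ℕ → G) (M : ℕ) :
    ∑ n ∈ Icc 1 M, f (n + 1) = ∑ n ∈ Icc 1 M, f n + f (M + 1) - f 1 := by
  have h := sum_Ico_sub f (Nat.le_add_left 1 M)
  rw [Ico_add_one_right_eq_Icc, sum_sub_distrib] at h
  rw [add_sub_assoc, ← h]
  abel

theorem sq_add_one_eq_add_two_mul_choose_two (m : ℕ) :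
    (m + 1) ^ 2 + 1 = m + 2 * (m.choose 2 + m + 1) := by
  induction m with
  | zero => rfl
  | succ m ih => rw [Nat.choose_succ_succ', Nat.choose_one_right]; nlinarith [ih]

section

variable {S : Type*} [CommRing S]

theorem qPochhammer_succ (y p : S) (K : ℕ) :
    qPochhammer y p (K + 1) = qPochhammer y p K * (1 - y * p ^ K) :=
  prod_range_succ _ _

theorem qPochhammer_succ' (y p : S) (K : ℕ) :
    qPochhammer y p (K + 1) = (1 - y) * qPochhammer (y * p) p K := by
  simp only [qPochhammer, prod_range_succ', pow_succ', pow_zero, mul_one, mul_assoc]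
  rw [mul_comm]

theorem qPochhammer_zero_right (y p : S) : qPochhammer y p 0 = 1 :=
  prod_range_zero _

theorem qPochhammer_zero_left (p : S) (K : ℕ) : qPochhammer 0 p K = 1 := by
  simp [qPochhammer]

theorem qPochhammer_eq_one_sub_mul_of_pow_eq_zero {p : S} {K : ℕ} (hK : p ^ K = 0) (y : S) :
    qPochhammer y p K = (1 - y) * qPochhammer (y * p) p K := by
  rw [← qPochhammer_succ', qPochhammer_succ, hK, mul_zero, sub_zero, mul_one]

theorem isUnit_qPochhammer_self {p : S} (hp : IsNilpotent p) (m : ℕ) :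
    IsUnit (qPochhammer p p m) :=
  IsUnit.prod_iff.mpr fun _ _ => ((Commute.all _ _).isNilpotent_mul_right hp).isUnit_one_sub

theorem one_sub_pow_mul_inverse_qPochhammer_succ {p : S} (hp : IsNilpotent p) (m : ℕ) :
    (1 - p ^ (m + 1)) * (qPochhammer p p (m + 1))⁻¹ʳ = (qPochhammer p p m)⁻¹ʳ := by
  have hunit := isUnit_qPochhammer_self hp (m + 1)
  rw [qPochhammer_succ, ← pow_succ'] at hunit ⊢
  rw [Ring.mul_inverse_rev' (Commute.all _ _), ← mul_assoc,
    Ring.mul_inverse_cancel _ (isUnit_of_mul_isUnit_right hunit), one_mul]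

-- One term beyond `m < K` is kept so that the term dropped from `eulerSum (y * p) p K` in the
-- recursion below contains `p ^ K`.
noncomputable def eulerSum (y p : S) (K : ℕ) : S :=
  ∑ m ∈ range (K + 1), (-y) ^ m * p ^ m.choose 2 * (qPochhammer p p m)⁻¹ʳ

theorem eulerSum_eq_one_sub_mul {p : S} {K : ℕ} (hK : p ^ K = 0) (y : S) :
    eulerSum y p K = (1 - y) * eulerSum (y * p) p K := by
  set t : S → ℕ → S := fun z m => (-z) ^ m * p ^ m.choose 2 * (qPochhammer p p m)⁻¹ʳ
  have hp : IsNilpotent p := ⟨K, hK⟩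
  have hterm : ∀ m, t y (m + 1) - t (y * p) (m + 1) = -y * t (y * p) m := by
    intro m
    have hinv := one_sub_pow_mul_inverse_qPochhammer_succ hp m
    simp only [t, Nat.choose_succ_succ', Nat.choose_one_right]
    rw [← hinv]
    ring
  have htop : t (y * p) K = 0 := by
    simp only [t, neg_mul_eq_neg_mul, mul_pow, hK, mul_zero, zero_mul]
  have hsum : eulerSum y p K - eulerSum (y * p) p K = -y * eulerSum (y * p) p K :=
    calc eulerSum y p K - eulerSum (y * p) p K
        = ∑ m ∈ range K, (t y (m + 1) - t (y * p) (m + 1)) := by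
          change ∑ m ∈ range (K + 1), t y m - ∑ m ∈ range (K + 1), t (y * p) m = _
          rw [← sum_sub_distrib, sum_range_succ']
          simp [t]
      _ = -y * ∑ m ∈ range K, t (y * p) m := by
          rw [mul_sum]; exact sum_congr rfl fun m _ => hterm m
      _ = -y * eulerSum (y * p) p K := by
          change _ = -y * ∑ m ∈ range (K + 1), t (y * p) m
          rw [sum_range_succ, htop, add_zero]
  linear_combination hsum

theorem eulerSum_zero_left (p : S) (K : ℕ) : eulerSum 0 p K = 1 := by
  simp [eulerSum, sum_range_succ', qPochhammer]

theorem qPochhammer_eq_eulerSum {p : S} {K : ℕ} (hK : p ^ K = 0) (y : S) :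
    qPochhammer y p K = eulerSum y p K := by
  have hiterate : ∀ j (z : S), eulerSum z p K = qPochhammer z p j * eulerSum (z * p ^ j) p K := by
    intro j
    induction j with
    | zero => simp [qPochhammer]
    | succ j ih =>
      intro z
      rw [eulerSum_eq_one_sub_mul hK, ih, qPochhammer_succ', pow_succ', mul_assoc, mul_assoc]
  rw [hiterate K y, hK, mul_zero, eulerSum_zero_left, mul_one]

-- The boundary term `p ^ ((M + 1) * k) (0; p)_K` survives only for `k = 0`.
theorem pow_succ_mul_sum_Icc_pow_mul_qPochhammer {p : S} {K M : ℕ} (hK : p ^ K = 0)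
    (hM : p ^ (M + 1) = 0) (k : ℕ) :
    p ^ (k + 1) * ∑ n ∈ Icc 1 M, p ^ (n * k) * qPochhammer (p ^ n) p K =
      p * ∑ n ∈ Icc 1 M, p ^ (n * k) * qPochhammer (p ^ n) p K + p * 0 ^ k
        - ∑ n ∈ Icc 1 M, p ^ (n * (k + 1)) * qPochhammer (p ^ n) p K := by
  set f : ℕ → ℕ → S := fun k n => p ^ (n * k) * qPochhammer (p ^ n) p K
  have hterm : ∀ n, p ^ (k + 1) * f k n = p * f k (n + 1) - f (k + 1) (n + 1) := by
    intro n
    simp only [f]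
    rw [qPochhammer_eq_one_sub_mul_of_pow_eq_zero hK, ← pow_succ]
    ring
  have htop : ∀ j, f j (M + 1) = 0 ^ j := by
    intro j
    simp only [f]
    rw [pow_mul, hM, qPochhammer_zero_left, mul_one]
  change p ^ (k + 1) * ∑ n ∈ Icc 1 M, f k n = p * ∑ n ∈ Icc 1 M, f k n + p * 0 ^ k
    - ∑ n ∈ Icc 1 M, f (k + 1) n
  rw [mul_sum, sum_congr rfl fun n _ => hterm n, sum_sub_distrib, ← mul_sum,
    sum_Icc_one_shift (f k), sum_Icc_one_shift (f (k + 1)), htop, htop]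
  simp only [f]
  ring

theorem sum_Icc_pow_mul_qPochhammer {p : S} {K M : ℕ} (hK : p ^ K = 0) (hM : p ^ (M + 1) = 0)
    (m : ℕ) :
    ∑ n ∈ Icc 1 M, p ^ (n * (m + 1)) * qPochhammer (p ^ n) p K =
      p ^ (m + 1) * qPochhammer p p m := by
  induction m with
  | zero =>
    have h := pow_succ_mul_sum_Icc_pow_mul_qPochhammer hK hM 0
    rw [pow_zero] at h
    rw [qPochhammer_zero_right]
    linear_combination h
  | succ m ih =>
    have h := pow_succ_mul_sum_Icc_pow_mul_qPochhammer hK hM (m + 1)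
    rw [ih, zero_pow (Nat.succ_ne_zero m)] at h
    rw [qPochhammer_succ]
    linear_combination h

theorem sum_Icc_pow_mul_qPochhammer_mul_qPochhammer {p : S} {K M : ℕ}
    (hK : p ^ K = 0) (hM : p ^ (M + 1) = 0) (c : S) :
    ∑ n ∈ Icc 1 M, p ^ n * qPochhammer (p ^ n) p K * qPochhammer (c * p ^ n) p K =
      ∑ m ∈ range (K + 1), (-c) ^ m * p ^ (m.choose 2 + m + 1) := by
  have hp : IsNilpotent p := ⟨K, hK⟩
  calc ∑ n ∈ Icc 1 M, p ^ n * qPochhammer (p ^ n) p K * qPochhammer (c * p ^ n) p K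
      = ∑ n ∈ Icc 1 M, ∑ m ∈ range (K + 1),
          (-c) ^ m * p ^ m.choose 2 * (qPochhammer p p m)⁻¹ʳ *
            (p ^ (n * (m + 1)) * qPochhammer (p ^ n) p K) := by
        refine sum_congr rfl fun n _ => ?_
        rw [qPochhammer_eq_eulerSum hK (c * p ^ n), eulerSum, mul_sum]
        refine sum_congr rfl fun m _ => ?_
        ring
    _ = ∑ m ∈ range (K + 1), (-c) ^ m * p ^ m.choose 2 * (qPochhammer p p m)⁻¹ʳ *
          (p ^ (m + 1) * qPochhammer p p m) := by
        rw [sum_comm]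
        refine sum_congr rfl fun m _ => ?_
        rw [← mul_sum, sum_Icc_pow_mul_qPochhammer hK hM m]
    _ = ∑ m ∈ range (K + 1), (-c) ^ m * p ^ (m.choose 2 + m + 1) := by
        refine sum_congr rfl fun m _ => ?_
        rw [mul_comm (p ^ (m + 1)), ← mul_assoc, mul_assoc _ _ (qPochhammer p p m),
          Ring.inverse_mul_cancel _ (isUnit_qPochhammer_self hp m)]
        ring

theorem mul_sum_pow_mul_prod_eq_sum_qPochhammer (x a : S) (N : ℕ) :
    x * ∑ n ∈ Icc 1 N, -a * x ^ (2 * n - 1) *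
        (∏ j ∈ range (N + 1), (1 - x ^ (2 * n + 2 * j))) *
        ∏ j ∈ range (N + 1), (1 - a * x ^ (2 * n + 1 + 2 * j)) =
      -a * ∑ n ∈ Icc 1 N, (x ^ 2) ^ n * qPochhammer ((x ^ 2) ^ n) (x ^ 2) (N + 1) *
        qPochhammer (a * x * (x ^ 2) ^ n) (x ^ 2) (N + 1) := by
  rw [mul_sum, mul_sum]
  refine sum_congr rfl fun n hn => ?_
  have hxn : x * x ^ (2 * n - 1) = (x ^ 2) ^ n := by
    rw [← pow_succ', ← pow_mul, Nat.sub_add_cancel (by have := (mem_Icc.mp hn).1; omega)]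
  have hA : qPochhammer ((x ^ 2) ^ n) (x ^ 2) (N + 1) =
      ∏ j ∈ range (N + 1), (1 - x ^ (2 * n + 2 * j)) :=
    prod_congr rfl fun j _ => by ring
  have hB : qPochhammer (a * x * (x ^ 2) ^ n) (x ^ 2) (N + 1) =
      ∏ j ∈ range (N + 1), (1 - a * x ^ (2 * n + 1 + 2 * j)) :=
    prod_congr rfl fun j _ => by ring
  rw [hA, hB, ← hxn]
  ring

theorem mul_sum_alladi_of_pow_eq_zero {x : S} {N : ℕ}
    (hx : x ^ (N + 2) = 0) (a : S) :
    x * ∑ n ∈ Icc 1 N, -a * x ^ (2 * n - 1) *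
        (∏ j ∈ range (N + 1), (1 - x ^ (2 * n + 2 * j))) *
        ∏ j ∈ range (N + 1), (1 - a * x ^ (2 * n + 1 + 2 * j)) =
      x * ∑ n ∈ Icc 1 N, (-a) ^ n * x ^ (n ^ 2) := by
  have hp : (x ^ 2) ^ (N + 1) = 0 := by
    rw [← pow_mul, show 2 * (N + 1) = N + 2 + N by ring, pow_add, hx, zero_mul]
  have hterm : ∀ m, -a * ((-(a * x)) ^ m * (x ^ 2) ^ (m.choose 2 + m + 1)) =
      x * ((-a) ^ (m + 1) * x ^ ((m + 1) ^ 2)) := by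
    intro m
    calc -a * ((-(a * x)) ^ m * (x ^ 2) ^ (m.choose 2 + m + 1))
        = (-a) ^ (m + 1) * x ^ (m + 2 * (m.choose 2 + m + 1)) := by ring
      _ = x * ((-a) ^ (m + 1) * x ^ ((m + 1) ^ 2)) := by
        rw [← sq_add_one_eq_add_two_mul_choose_two]; ring
  have hvanish : ∀ n ∈ Icc 1 (N + 2), n ∉ Icc 1 N → x * ((-a) ^ n * x ^ (n ^ 2)) = 0 := by
    intro n hn hn'
    have hNn : N + 2 ≤ n ^ 2 + 1 := by
      simp only [mem_Icc, not_and, not_le] at hn hn'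
      nlinarith [hn' hn.1]
    rw [mul_left_comm, ← pow_succ', ← Nat.sub_add_cancel hNn, pow_add, hx, mul_zero, mul_zero]
  calc _ = -a * ∑ m ∈ range (N + 1 + 1), (-(a * x)) ^ m * (x ^ 2) ^ (m.choose 2 + m + 1) := by
        rw [mul_sum_pow_mul_prod_eq_sum_qPochhammer,
          sum_Icc_pow_mul_qPochhammer_mul_qPochhammer hp hp]
    _ = ∑ n ∈ Icc 1 (N + 2), x * ((-a) ^ n * x ^ (n ^ 2)) := by
        rw [mul_sum, sum_congr rfl fun m _ => hterm m, range_eq_Ico,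
          sum_Ico_add' (fun n => x * ((-a) ^ n * x ^ (n ^ 2))), Ico_add_one_right_eq_Icc]
    _ = x * ∑ n ∈ Icc 1 N, (-a) ^ n * x ^ (n ^ 2) := by
        rw [mul_sum]
        exact (sum_subset (Icc_subset_Icc_right (by omega)) hvanish).symm

end

theorem PowerSeries.coeff_eq_of_mk_X_mul_eq {R : Type*} [CommRing R] {f g : PowerSeries R} {N : ℕ}
    (h : Ideal.Quotient.mk (Ideal.span {X ^ (N + 2)}) (X * f) =
      Ideal.Quotient.mk (Ideal.span {X ^ (N + 2)}) (X * g)) :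
    coeff N f = coeff N g := by
  rw [Ideal.Quotient.eq, Ideal.mem_span_singleton, X_pow_dvd_iff] at h
  rw [← coeff_succ_X_mul N f, ← coeff_succ_X_mul N g, ← sub_eq_zero, ← map_sub]
  exact h (N + 1) (Nat.lt_succ_self _)

/-- Summands with `n > N` and factors with `j > N` do not affect the `N`-th coefficient, so the
truncations below are exact. -/
theorem alladi_partial_theta (N : ℕ) :
    PowerSeries.coeff (R := Polynomial ℤ) N
      (∑ n ∈ Finset.Icc 1 N,
        (-(PowerSeries.C (R := Polynomial ℤ) Polynomial.X)) * PowerSeries.X ^ (2 * n - 1) *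
          (∏ j ∈ Finset.range (N + 1), (1 - PowerSeries.X ^ (2 * n + 2 * j))) *
          (∏ j ∈ Finset.range (N + 1),
            (1 - PowerSeries.C (R := Polynomial ℤ) Polynomial.X *
              PowerSeries.X ^ (2 * n + 1 + 2 * j)))) =
    PowerSeries.coeff (R := Polynomial ℤ) N
      (∑ n ∈ Finset.Icc 1 N,
        (-(PowerSeries.C (R := Polynomial ℤ) Polynomial.X)) ^ n * PowerSeries.X ^ (n ^ 2)) := by
  apply PowerSeries.coeff_eq_of_mk_X_mul_eq
  have hx : Ideal.Quotient.mk (Ideal.span {PowerSeries.X ^ (N + 2)})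
      (PowerSeries.X : PowerSeries (Polynomial ℤ)) ^ (N + 2) = 0 := by
    rw [← map_pow, Ideal.Quotient.eq_zero_iff_mem]
    exact Ideal.mem_span_singleton_self _
  simp only [map_mul, map_sum, map_prod, map_sub, map_one, map_neg, map_pow]
  exact mul_sum_alladi_of_pow_eq_zero hx _
end

section
/- For λ a partition of n into distinct nonnegative parts (so 0 may appear as a part, all parts distinct) whose smallest part is even, having l parts of which ℓ_o(λ) are odd, define ω_e(λ) = (-1)^{l-1} a^{ℓ_o(λ)}. Then ∑_{λ ∈ Q(n)} ω_e(λ) = (-a)^k if n = k^2 for some positive integer k, and 0 otherwise, as polynomials in a. -/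
/-!
Adding or removing the part `0` is a sign-reversing involution on all finite sets of naturals
with sum `n` that keeps the number of odd parts. As `Q(n)` consists of the nonempty such sets with
even least part, the sum over `Q(n)` equals `∑ (-1)^#T a^{ℓ_o(T)}` over the complementary sets `T`,
those that are empty or have odd least part.

Among these, the ones with `j` odd parts have signed count `∑ (-1)^#T = (-1)^j [n = j²]`, by
induction on `j`. Removing the part `1` and lowering every other odd part by `2` maps the sets
containing `1` in which every even part `x` has an odd part `p` with `1 < p < x + 2` bijectively onto
the sets for `(j - 1, n - 2j + 1)`. All other sets cancel in pairs: replace the least part `m` of a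
set without `1` by the two parts `1` and `m - 1`.
-/

open Finset

open scoped Classical in
/-- `Qset n` : partitions of `n` into distinct nonnegative parts (so `0` may be a part)
with smallest part even, encoded as finsets of parts. -/
noncomputable def Qset (n : ℕ) : Finset (Finset ℕ) :=
  (Finset.range (n + 1)).powerset.filter
    (fun S => S.sum id = n ∧ ∃ m ∈ S, Even m ∧ ∀ x ∈ S, m ≤ x)

namespace QPartition

open scoped Classical

def oddCount (T : Finset ℕ) : ℕ := #(T.filter (fun x => Odd x))

lemma oddCount_eq_sum_mod_two (T : Finset ℕ) : oddCount T = ∑ x ∈ T, x % 2 := by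
  rw [oddCount, card_filter]
  refine sum_congr rfl fun x _ => ?_
  split_ifs with h
  · exact (Nat.odd_iff.mp h).symm
  · exact (Nat.not_odd_iff.mp h).symm

lemma oddCount_le_sum (T : Finset ℕ) : oddCount T ≤ ∑ x ∈ T, x := by
  rw [oddCount_eq_sum_mod_two]
  exact sum_le_sum fun x _ => Nat.mod_le x 2

/-- Equivalently, `T = ∅` or the least element of `T` is odd. -/
def OddBelowEven (T : Finset ℕ) : Prop := ∀ x ∈ T, Even x → ∃ p ∈ T, Odd p ∧ p < x

lemma oddBelowEven_of_isLeast {T : Finset ℕ} {m : ℕ} (hm : IsLeast (T : Set ℕ) m)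
    (hodd : Odd m) : OddBelowEven T := fun x hx hx_even =>
  ⟨m, hm.1, hodd, (hm.2 hx).lt_of_ne (by rintro rfl; exact Nat.not_even_iff_odd.2 hodd hx_even)⟩

lemma OddBelowEven.odd_of_isLeast {T : Finset ℕ} {m : ℕ} (hT : OddBelowEven T)
    (hm : IsLeast (T : Set ℕ) m) : Odd m := by
  by_contra h
  obtain ⟨p, hp, -, hpm⟩ := hT m hm.1 (Nat.not_odd_iff_even.1 h)
  exact (hm.2 hp).not_gt hpm

lemma not_oddBelowEven_iff {T : Finset ℕ} :
    ¬ OddBelowEven T ↔ ∃ m ∈ T, Even m ∧ ∀ x ∈ T, m ≤ x := by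
  constructor
  · intro h
    have hne : T.Nonempty := by
      by_contra hT
      exact h fun x hx _ => absurd ⟨x, hx⟩ hT
    refine ⟨T.min' hne, T.min'_mem hne, ?_, fun x hx => T.min'_le x hx⟩
    by_contra hodd
    exact h (oddBelowEven_of_isLeast (T.isLeast_min' hne) (Nat.not_even_iff_odd.1 hodd))
  · rintro ⟨m, hm, heven, hle⟩ h
    exact Nat.not_even_iff_odd.2 (h.odd_of_isLeast ⟨hm, fun x hx => hle x hx⟩) heven

lemma OddBelowEven.eq_empty_of_oddCount_eq_zero {T : Finset ℕ} (hT : OddBelowEven T)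
    (h : oddCount T = 0) : T = ∅ := by
  refine T.eq_empty_or_nonempty.resolve_right fun hne => ?_
  have hodd := hT.odd_of_isLeast (T.isLeast_min' hne)
  exact (card_pos.2 ⟨_, mem_filter.2 ⟨T.min'_mem hne, hodd⟩⟩).ne' h

def finsetsWithSum (n : ℕ) : Finset (Finset ℕ) :=
  (range (n + 1)).powerset.filter (fun S => ∑ x ∈ S, x = n)

noncomputable def oddBelowEvenParts (n : ℕ) : Finset (Finset ℕ) :=
  (finsetsWithSum n).filter OddBelowEven

noncomputable def oddBelowEvenPartsWith (j n : ℕ) : Finset (Finset ℕ) :=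
  (oddBelowEvenParts n).filter (fun T => oddCount T = j)

lemma mem_finsetsWithSum {n : ℕ} {S : Finset ℕ} : S ∈ finsetsWithSum n ↔ ∑ x ∈ S, x = n := by
  refine mem_filter.trans ⟨And.right, fun h => ⟨mem_powerset.2 fun x hx => ?_, h⟩⟩
  have := single_le_sum (fun i _ => Nat.zero_le i) hx
  rw [mem_range]
  omega

lemma mem_oddBelowEvenPartsWith {j n : ℕ} {T : Finset ℕ} :
    T ∈ oddBelowEvenPartsWith j n ↔ ∑ x ∈ T, x = n ∧ OddBelowEven T ∧ oddCount T = j := by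
  simp only [oddBelowEvenPartsWith, oddBelowEvenParts, mem_filter, mem_finsetsWithSum, and_assoc]

def raiseOdd (x : ℕ) : ℕ := x + 2 * (x % 2)

def lowerOdd (x : ℕ) : ℕ := x - 2 * (x % 2)

def peel (T : Finset ℕ) : Finset ℕ := (T.erase 1).image lowerOdd

def unpeel (T : Finset ℕ) : Finset ℕ := insert 1 (T.image raiseOdd)

lemma raiseOdd_injective : Function.Injective raiseOdd := fun x y h => by
  simp only [raiseOdd] at h
  omega

lemma one_notMem_image_raiseOdd (T : Finset ℕ) : 1 ∉ T.image raiseOdd := by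
  simp only [mem_image, raiseOdd, not_exists, not_and]
  intro x _
  omega

lemma peel_unpeel (T : Finset ℕ) : peel (unpeel T) = T := by
  have h : lowerOdd ∘ raiseOdd = id := funext fun x => by
    simp only [Function.comp, lowerOdd, raiseOdd, id]
    omega
  rw [peel, unpeel, erase_insert (one_notMem_image_raiseOdd T), image_image, h, image_id]

lemma unpeel_peel {T : Finset ℕ} (h1 : 1 ∈ T) : unpeel (peel T) = T := by
  have h : Set.EqOn (raiseOdd ∘ lowerOdd) id ↑(T.erase 1) := fun x hx => by
    have := ne_of_mem_erase hx
    simp only [Function.comp, lowerOdd, raiseOdd, id]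
    omega
  rw [unpeel, peel, image_image, image_congr h, image_id, insert_erase h1]

lemma card_unpeel (T : Finset ℕ) : #(unpeel T) = #T + 1 := by
  rw [unpeel, card_insert_of_notMem (one_notMem_image_raiseOdd T),
    card_image_of_injective _ raiseOdd_injective]

lemma sum_unpeel (T : Finset ℕ) : ∑ x ∈ unpeel T, x = ∑ x ∈ T, x + 2 * oddCount T + 1 := by
  rw [unpeel, sum_insert (one_notMem_image_raiseOdd T), sum_image raiseOdd_injective.injOn,
    oddCount_eq_sum_mod_two, mul_sum, ← sum_add_distrib]
  simp only [raiseOdd]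
  ring

lemma oddCount_unpeel (T : Finset ℕ) : oddCount (unpeel T) = oddCount T + 1 := by
  have h : ∀ x, raiseOdd x % 2 = x % 2 := fun x => by
    simp only [raiseOdd]
    omega
  rw [oddCount_eq_sum_mod_two, oddCount_eq_sum_mod_two, unpeel,
    sum_insert (one_notMem_image_raiseOdd T), sum_image raiseOdd_injective.injOn]
  simp only [h]
  omega

/-- The sets that `peel` maps onto `OddBelowEven` sets with one odd part fewer. -/
def IsPeelable (T : Finset ℕ) : Prop :=
  1 ∈ T ∧ ∀ x ∈ T, Even x → ∃ p ∈ T, Odd p ∧ 1 < p ∧ p < x + 2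

lemma IsPeelable.oddBelowEven {T : Finset ℕ} (hT : IsPeelable T) : OddBelowEven T :=
  fun x hx hx_even => by
    obtain ⟨p, -, hp_odd, hp1, hpx⟩ := hT.2 x hx hx_even
    refine ⟨1, hT.1, odd_one, ?_⟩
    rw [Nat.odd_iff] at hp_odd
    rw [Nat.even_iff] at hx_even
    omega

lemma IsPeelable.oddBelowEven_peel {T : Finset ℕ} (hT : IsPeelable T) :
    OddBelowEven (peel T) := by
  intro y hy hy_even
  obtain ⟨x, hx, rfl⟩ := mem_image.1 hy
  obtain ⟨hx1, hxT⟩ := mem_erase.1 hx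
  rw [Nat.even_iff, lowerOdd] at hy_even
  obtain ⟨p, hp, hp_odd, hp1, hpx⟩ := hT.2 x hxT (Nat.even_iff.2 (by omega))
  refine ⟨lowerOdd p, mem_image_of_mem _ (mem_erase.2 ⟨hp1.ne', hp⟩), ?_, ?_⟩ <;>
    rw [Nat.odd_iff] at hp_odd <;> simp only [lowerOdd, Nat.odd_iff] <;> omega

lemma OddBelowEven.isPeelable_unpeel {T : Finset ℕ} (hT : OddBelowEven T) :
    IsPeelable (unpeel T) := by
  refine ⟨mem_insert_self _ _, fun x hx hx_even => ?_⟩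
  rcases mem_insert.1 hx with rfl | hx
  · exact absurd hx_even (by decide)
  obtain ⟨y, hy, rfl⟩ := mem_image.1 hx
  rw [Nat.even_iff, raiseOdd] at hx_even
  obtain ⟨q, hq, hq_odd, hqy⟩ := hT y hy (Nat.even_iff.2 (by omega))
  rw [Nat.odd_iff] at hq_odd
  refine ⟨raiseOdd q, mem_insert_of_mem (mem_image_of_mem _ hq), ?_, ?_, ?_⟩ <;>
    simp only [raiseOdd, Nat.odd_iff] <;> omega

noncomputable def splitLeast (T : Finset ℕ) : Finset ℕ :=
  insert 1 (insert (sInf (T : Set ℕ) - 1) (T.erase (sInf (T : Set ℕ))))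

noncomputable def fuseOne (T : Finset ℕ) : Finset ℕ :=
  insert (sInf (↑(T.erase 1) : Set ℕ) + 1) ((T.erase 1).erase (sInf (↑(T.erase 1) : Set ℕ)))

section SplitLeast

variable {T : Finset ℕ} {m : ℕ}

lemma splitLeast_eq (hm : IsLeast (T : Set ℕ) m) :
    splitLeast T = insert 1 (insert (m - 1) (T.erase m)) := by
  rw [splitLeast, hm.csInf_eq]

lemma pred_notMem_erase (hm : IsLeast (T : Set ℕ) m) : m - 1 ∉ T.erase m := fun h => by
  have := hm.2 (mem_of_mem_erase h)
  have := ne_of_mem_erase h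
  omega

lemma one_notMem_insert_pred_erase (hm : IsLeast (T : Set ℕ) m) (hm3 : 3 ≤ m) :
    1 ∉ insert (m - 1) (T.erase m) := by
  rw [mem_insert, not_or]
  exact ⟨by omega, fun h => by have := hm.2 (mem_of_mem_erase h); omega⟩

lemma sum_splitLeast_add {M : Type*} [AddCommMonoid M] (f : ℕ → M)
    (hm : IsLeast (T : Set ℕ) m) (hm3 : 3 ≤ m) :
    ∑ x ∈ splitLeast T, f x + f m = f 1 + f (m - 1) + ∑ x ∈ T, f x := by
  rw [splitLeast_eq hm, sum_insert (one_notMem_insert_pred_erase hm hm3),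
    sum_insert (pred_notMem_erase hm), ← add_sum_erase T f hm.1]
  abel

lemma sum_splitLeast (hm : IsLeast (T : Set ℕ) m) (hm3 : 3 ≤ m) :
    ∑ x ∈ splitLeast T, x = ∑ x ∈ T, x := by
  have := sum_splitLeast_add id hm hm3
  simp only [id] at this
  omega

lemma oddCount_splitLeast (hm : IsLeast (T : Set ℕ) m) (hm3 : 3 ≤ m) (hodd : Odd m) :
    oddCount (splitLeast T) = oddCount T := by
  have := sum_splitLeast_add (· % 2) hm hm3
  rw [Nat.odd_iff] at hodd
  rw [oddCount_eq_sum_mod_two, oddCount_eq_sum_mod_two]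
  omega

lemma card_splitLeast (hm : IsLeast (T : Set ℕ) m) (hm3 : 3 ≤ m) :
    #(splitLeast T) = #T + 1 := by
  have := sum_splitLeast_add (fun _ => 1) hm hm3
  simp only [← card_eq_sum_ones] at this
  omega

lemma oddBelowEven_splitLeast (hm : IsLeast (T : Set ℕ) m) (hm3 : 3 ≤ m) :
    OddBelowEven (splitLeast T) := by
  refine oddBelowEven_of_isLeast ⟨by simp [splitLeast], fun x hx => ?_⟩ odd_one
  rw [splitLeast_eq hm, mem_coe, mem_insert, mem_insert] at hx
  rcases hx with rfl | rfl | hx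
  · rfl
  · omega
  · have := hm.2 (mem_of_mem_erase hx); omega

lemma not_isPeelable_splitLeast (hm : IsLeast (T : Set ℕ) m) (hm3 : 3 ≤ m) (hodd : Odd m) :
    ¬ IsPeelable (splitLeast T) := by
  rintro ⟨-, h⟩
  rw [Nat.odd_iff] at hodd
  obtain ⟨p, hp, hp_odd, hp1, hpm⟩ := h (m - 1) (by simp [splitLeast_eq hm])
    (Nat.even_iff.2 (by omega))
  rw [Nat.odd_iff] at hp_odd
  rw [splitLeast_eq hm, mem_insert, mem_insert] at hp
  rcases hp with rfl | rfl | hp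
  · omega
  · omega
  · obtain ⟨hpm', hpT⟩ := mem_erase.1 hp
    have := hm.2 hpT
    omega

lemma fuseOne_splitLeast (hm : IsLeast (T : Set ℕ) m) (hm3 : 3 ≤ m) :
    fuseOne (splitLeast T) = T := by
  have hleast : IsLeast (↑(insert (m - 1) (T.erase m)) : Set ℕ) (m - 1) := by
    refine ⟨mem_insert_self _ _, fun x hx => ?_⟩
    rcases mem_insert.1 hx with rfl | hx
    · rfl
    · have := hm.2 (mem_of_mem_erase hx); omega
  rw [fuseOne, splitLeast_eq hm, erase_insert (one_notMem_insert_pred_erase hm hm3),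
    hleast.csInf_eq, erase_insert (pred_notMem_erase hm),
    Nat.sub_add_cancel (by omega), insert_erase hm.1]

end SplitLeast

section FuseOne

variable {T : Finset ℕ} {e : ℕ}

lemma exists_isLeast_erase_one (hT : OddBelowEven T) (h1 : 1 ∈ T) (hbad : ¬ IsPeelable T) :
    ∃ e, IsLeast (↑(T.erase 1) : Set ℕ) e ∧ Even e ∧ 2 ≤ e ∧ e + 1 ∉ T := by
  simp only [IsPeelable, h1, true_and, not_forall, not_exists, not_and, not_lt] at hbad
  obtain ⟨x, hx, hx_even, hx_far⟩ := hbad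
  have hx1 : x ∈ T.erase 1 := mem_erase.2 ⟨by rintro rfl; exact absurd hx_even (by decide), hx⟩
  obtain ⟨e, he⟩ : ∃ e, IsLeast (↑(T.erase 1) : Set ℕ) e := ⟨_, (T.erase 1).isLeast_min' ⟨x, hx1⟩⟩
  obtain ⟨he1, heT⟩ := mem_erase.1 he.1
  have hex : e ≤ x := he.2 hx1
  have he_even : Even e := by
    by_contra h
    have := hx_far e heT (Nat.not_even_iff_odd.1 h)
    rw [Nat.not_even_iff] at h
    omega
  obtain ⟨p, -, -, hpe⟩ := hT e heT he_even
  refine ⟨e, he, he_even, ?_, fun h => ?_⟩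
  · rw [Nat.even_iff] at he_even
    omega
  · have := hx_far (e + 1) h (he_even.add_one)
    omega

lemma isLeast_fuseOne (he : IsLeast (↑(T.erase 1) : Set ℕ) e) (he1 : e + 1 ∉ T) :
    IsLeast (fuseOne T : Set ℕ) (e + 1) := by
  rw [fuseOne, he.csInf_eq]
  refine ⟨mem_insert_self _ _, fun x hx => ?_⟩
  rcases mem_insert.1 hx with rfl | hx
  · rfl
  · obtain ⟨hxe, hx'⟩ := mem_erase.1 hx
    have := he.2 hx'
    have : x ≠ e + 1 := by rintro rfl; exact he1 (mem_of_mem_erase hx')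
    omega

lemma splitLeast_fuseOne (he : IsLeast (↑(T.erase 1) : Set ℕ) e) (he1 : e + 1 ∉ T)
    (h1 : 1 ∈ T) : splitLeast (fuseOne T) = T := by
  have hnot : e + 1 ∉ (T.erase 1).erase e := fun h => he1 (mem_of_mem_erase (mem_of_mem_erase h))
  rw [splitLeast_eq (isLeast_fuseOne he he1), fuseOne, he.csInf_eq, erase_insert hnot,
    Nat.add_sub_cancel, insert_erase he.1, insert_erase h1]

lemma exists_isLeast_fuseOne (hT : OddBelowEven T) (h1 : 1 ∈ T) (hbad : ¬ IsPeelable T) :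
    ∃ m, IsLeast (fuseOne T : Set ℕ) m ∧ Odd m ∧ 3 ≤ m ∧ splitLeast (fuseOne T) = T := by
  obtain ⟨e, he, he_even, he2, he1⟩ := exists_isLeast_erase_one hT h1 hbad
  exact ⟨e + 1, isLeast_fuseOne he he1, he_even.add_one, by omega, splitLeast_fuseOne he he1 h1⟩

end FuseOne

section Cancellation

variable {j n : ℕ} {T : Finset ℕ}

lemma exists_isLeast_of_one_notMem (hT : T ∈ oddBelowEvenPartsWith (j + 1) n) (h1 : 1 ∉ T) :
    ∃ m, IsLeast (T : Set ℕ) m ∧ Odd m ∧ 3 ≤ m := by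
  obtain ⟨-, hT, hodd⟩ := mem_oddBelowEvenPartsWith.1 hT
  have hpos : 0 < oddCount T := by omega
  have hne : T.Nonempty := (card_pos.1 hpos).mono (filter_subset _ _)
  have hm := T.isLeast_min' hne
  have hm_odd := hT.odd_of_isLeast hm
  have hm1 : T.min' hne ≠ 1 := fun h => h1 (h ▸ hm.1)
  rw [Nat.odd_iff] at hm_odd
  exact ⟨_, hm, Nat.odd_iff.2 hm_odd, by omega⟩

lemma splitLeast_mem (hT : T ∈ oddBelowEvenPartsWith (j + 1) n) (h1 : 1 ∉ T) :
    splitLeast T ∈ oddBelowEvenPartsWith (j + 1) n ∧ ¬ IsPeelable (splitLeast T) ∧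
      1 ∈ splitLeast T := by
  obtain ⟨m, hm, hm_odd, hm3⟩ := exists_isLeast_of_one_notMem hT h1
  rw [mem_oddBelowEvenPartsWith] at hT ⊢
  obtain ⟨hsum, -, hodd⟩ := hT
  refine ⟨⟨?_, oddBelowEven_splitLeast hm hm3, ?_⟩, not_isPeelable_splitLeast hm hm3 hm_odd,
    mem_insert_self _ _⟩
  · rw [sum_splitLeast hm hm3, hsum]
  · rw [oddCount_splitLeast hm hm3 hm_odd, hodd]

lemma fuseOne_mem (hT : T ∈ oddBelowEvenPartsWith j n) (h1 : 1 ∈ T) (hbad : ¬ IsPeelable T) :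
    fuseOne T ∈ oddBelowEvenPartsWith j n ∧ ¬ IsPeelable (fuseOne T) ∧ 1 ∉ fuseOne T := by
  rw [mem_oddBelowEvenPartsWith] at hT ⊢
  obtain ⟨hsum, hT, hodd⟩ := hT
  obtain ⟨m, hm, hm_odd, hm3, hsplit⟩ := exists_isLeast_fuseOne hT h1 hbad
  have h1U : 1 ∉ fuseOne T := fun h => by have := hm.2 h; omega
  refine ⟨⟨?_, oddBelowEven_of_isLeast hm hm_odd, ?_⟩, fun h => h1U h.1, h1U⟩
  · rw [← sum_splitLeast hm hm3, hsplit, hsum]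
  · rw [← oddCount_splitLeast hm hm3 hm_odd, hsplit, hodd]

/-- `fuseOne` and `splitLeast` exchange the non-peelable sets with and without the part `1`,
changing the number of parts by one. -/
lemma sum_not_isPeelable (j n : ℕ) :
    ∑ T ∈ (oddBelowEvenPartsWith (j + 1) n).filter (fun T => ¬ IsPeelable T),
      (-1 : ℤ) ^ #T = 0 := by
  rw [← sum_filter_add_sum_filter_not _ (fun T => 1 ∈ T), add_eq_zero_iff_eq_neg,
    ← sum_neg_distrib]
  simp only [filter_filter]
  refine sum_nbij' fuseOne splitLeast (fun T hT => ?_) (fun T hT => ?_) (fun T hT => ?_)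
    (fun T hT => ?_) (fun T hT => ?_) <;> obtain ⟨hT, hbad, h1⟩ := mem_filter.1 hT
  · exact mem_filter.2 (fuseOne_mem hT h1 hbad)
  · exact mem_filter.2 (splitLeast_mem hT h1)
  · obtain ⟨m, -, -, -, hsplit⟩ :=
      exists_isLeast_fuseOne (mem_oddBelowEvenPartsWith.1 hT).2.1 h1 hbad
    exact hsplit
  · obtain ⟨m, hm, -, hm3⟩ := exists_isLeast_of_one_notMem hT h1
    exact fuseOne_splitLeast hm hm3
  · obtain ⟨m, hm, -, hm3, hsplit⟩ :=
      exists_isLeast_fuseOne (mem_oddBelowEvenPartsWith.1 hT).2.1 h1 hbad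
    conv_lhs => rw [← hsplit]
    rw [card_splitLeast hm hm3, pow_succ]
    ring

end Cancellation

noncomputable def signedCount (j n : ℕ) : ℤ := ∑ T ∈ oddBelowEvenPartsWith j n, (-1) ^ #T

lemma peel_mem_of_isPeelable {j n : ℕ} {T : Finset ℕ} (hT : T ∈ oddBelowEvenPartsWith (j + 1) n)
    (hpeel : IsPeelable T) :
    2 * j + 1 ≤ n ∧ peel T ∈ oddBelowEvenPartsWith j (n - (2 * j + 1)) := by
  rw [mem_oddBelowEvenPartsWith] at hT ⊢
  obtain ⟨hsum, -, hodd⟩ := hT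
  have hsum' := sum_unpeel (peel T)
  have hodd' := oddCount_unpeel (peel T)
  rw [unpeel_peel hpeel.1] at hsum' hodd'
  refine ⟨by omega, by omega, hpeel.oddBelowEven_peel, by omega⟩

lemma unpeel_mem {j m : ℕ} {T : Finset ℕ} (hT : T ∈ oddBelowEvenPartsWith j m) :
    unpeel T ∈ oddBelowEvenPartsWith (j + 1) (m + (2 * j + 1)) ∧ IsPeelable (unpeel T) := by
  rw [mem_oddBelowEvenPartsWith] at hT ⊢
  obtain ⟨hsum, hT, hodd⟩ := hT
  have hpeel := hT.isPeelable_unpeel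
  refine ⟨⟨?_, hpeel.oddBelowEven, ?_⟩, hpeel⟩
  · rw [sum_unpeel, hsum, hodd]; ring
  · rw [oddCount_unpeel, hodd]

lemma sum_isPeelable (j n : ℕ) :
    ∑ T ∈ (oddBelowEvenPartsWith (j + 1) n).filter IsPeelable, (-1 : ℤ) ^ #T =
      if 2 * j + 1 ≤ n then -signedCount j (n - (2 * j + 1)) else 0 := by
  split_ifs with hn
  · rw [signedCount, ← sum_neg_distrib]
    apply sum_nbij' peel unpeel
    · intro T hT
      obtain ⟨hT, hpeel⟩ := mem_filter.1 hT
      exact (peel_mem_of_isPeelable hT hpeel).2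
    · intro T hT
      obtain ⟨hmem, hpeel⟩ := unpeel_mem hT
      rw [Nat.sub_add_cancel hn] at hmem
      exact mem_filter.2 ⟨hmem, hpeel⟩
    · intro T hT
      exact unpeel_peel (mem_filter.1 hT).2.1
    · intro T _
      exact peel_unpeel T
    · intro T hT
      conv_lhs => rw [← unpeel_peel (mem_filter.1 hT).2.1]
      rw [card_unpeel, pow_succ]
      ring
  · refine sum_eq_zero fun T hT => ?_
    obtain ⟨hT, hpeel⟩ := mem_filter.1 hT
    exact absurd (peel_mem_of_isPeelable hT hpeel).1 hn

lemma signedCount_succ (j n : ℕ) :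
    signedCount (j + 1) n = if 2 * j + 1 ≤ n then -signedCount j (n - (2 * j + 1)) else 0 := by
  rw [signedCount, ← sum_filter_add_sum_filter_not _ IsPeelable, sum_not_isPeelable, add_zero,
    sum_isPeelable]

lemma signedCount_zero (n : ℕ) : signedCount 0 n = if n = 0 then 1 else 0 := by
  have hempty : ∀ T ∈ oddBelowEvenPartsWith 0 n, T = ∅ := fun T hT => by
    obtain ⟨-, hT, hodd⟩ := mem_oddBelowEvenPartsWith.1 hT
    exact hT.eq_empty_of_oddCount_eq_zero hodd
  split_ifs with hn
  · subst hn
    have : oddBelowEvenPartsWith 0 0 = {∅} := eq_singleton_iff_unique_mem.2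
      ⟨mem_oddBelowEvenPartsWith.2 ⟨rfl, fun _ h => absurd h (notMem_empty _), rfl⟩, hempty⟩
    rw [signedCount, this, sum_singleton, card_empty, pow_zero]
  · refine sum_eq_zero fun T hT => ?_
    have hsum := (mem_oddBelowEvenPartsWith.1 hT).1
    rw [hempty T hT, sum_empty] at hsum
    exact absurd hsum.symm hn

theorem signedCount_eq (j n : ℕ) : signedCount j n = if n = j ^ 2 then (-1) ^ j else 0 := by
  induction j generalizing n with
  | zero => simp [signedCount_zero]
  | succ j ih =>
    have hsq : (j + 1) ^ 2 = j ^ 2 + (2 * j + 1) := by ring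
    rw [signedCount_succ, ih, pow_succ (-1 : ℤ)]
    split_ifs <;> omega

lemma sum_range_ite_eq_sq {M : Type*} [AddCommMonoid M] (f : ℕ → M) (n : ℕ) :
    ∑ j ∈ range (n + 1), (if n = j ^ 2 then f j else 0) =
      if IsSquare n then f (Nat.sqrt n) else 0 := by
  split_ifs with hn
  · obtain ⟨r, rfl⟩ := hn
    rw [Nat.sqrt_eq, sum_eq_single r]
    · rw [if_pos (sq r).symm]
    · intro j _ hj
      refine if_neg fun h => hj ?_
      rw [← sq] at h
      exact (Nat.pow_left_injective two_ne_zero h).symm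
    · intro hr
      exact absurd (mem_range.2 (Nat.lt_succ_of_le (Nat.le_mul_self r))) hr
  · exact sum_eq_zero fun j _ => if_neg fun h => hn ⟨j, h.trans (sq j)⟩

lemma sum_oddBelowEvenParts {R : Type*} [CommRing R] (x : R) (n : ℕ) :
    ∑ T ∈ oddBelowEvenParts n, (-1) ^ #T * x ^ oddCount T =
      if IsSquare n then (-x) ^ Nat.sqrt n else 0 := by
  have hmaps : ∀ T ∈ oddBelowEvenParts n, oddCount T ∈ range (n + 1) := fun T hT => by
    have := oddCount_le_sum T
    rw [oddBelowEvenParts, mem_filter, mem_finsetsWithSum] at hT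
    rw [mem_range]
    omega
  rw [← sum_fiberwise_of_maps_to hmaps, ← sum_range_ite_eq_sq]
  refine sum_congr rfl fun j _ => ?_
  have hfiber : ∑ T ∈ oddBelowEvenPartsWith j n, (-1 : R) ^ #T * x ^ oddCount T =
      signedCount j n * x ^ j := by
    rw [signedCount, Int.cast_sum, sum_mul]
    refine sum_congr rfl fun T hT => ?_
    rw [(mem_filter.1 hT).2]
    push_cast
    rfl
  rw [← oddBelowEvenPartsWith, hfiber, signedCount_eq]
  split_ifs
  · push_cast
    rw [neg_pow x]
  · simp

lemma sum_finsetsWithSum {R : Type*} [CommRing R] (x : R) (n : ℕ) :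
    ∑ S ∈ finsetsWithSum n, (-1) ^ #S * x ^ oddCount S = 0 := by
  have h0 : (0 : ℕ) ∉ (range (n + 1)).erase 0 := notMem_erase 0 _
  rw [finsetsWithSum, sum_filter, ← insert_erase (mem_range.2 n.succ_pos), sum_powerset_insert h0,
    ← sum_add_distrib]
  refine sum_eq_zero fun S hS => ?_
  have hS0 : 0 ∉ S := fun h => h0 (mem_powerset.1 hS h)
  have hodd : oddCount (insert 0 S) = oddCount S := by
    rw [oddCount_eq_sum_mod_two, oddCount_eq_sum_mod_two, sum_insert hS0, Nat.zero_mod, zero_add]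
  rw [sum_insert hS0, zero_add, card_insert_of_notMem hS0, hodd, pow_succ]
  split_ifs <;> ring

lemma Qset_eq_filter (n : ℕ) : Qset n = (finsetsWithSum n).filter (fun S => ¬ OddBelowEven S) := by
  rw [Qset, finsetsWithSum, filter_filter]
  refine filter_congr fun S _ => ?_
  rw [not_oddBelowEven_iff]
  rfl

lemma sum_Qset {R : Type*} [CommRing R] (x : R) (n : ℕ) :
    ∑ S ∈ Qset n, (-1) ^ (#S - 1) * x ^ oddCount S =
      ∑ T ∈ oddBelowEvenParts n, (-1) ^ #T * x ^ oddCount T := by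
  have hneg : ∀ S ∈ Qset n, (-1 : R) ^ (#S - 1) * x ^ oddCount S = -((-1) ^ #S * x ^ oddCount S) :=
    fun S hS => by
      rw [Qset_eq_filter, mem_filter, not_oddBelowEven_iff] at hS
      obtain ⟨-, m, hm, -⟩ := hS
      rw [← Nat.sub_add_cancel (card_pos.2 ⟨m, hm⟩), pow_succ, Nat.add_sub_cancel]
      ring
  rw [sum_congr rfl hneg, sum_neg_distrib, neg_eq_iff_add_eq_zero, Qset_eq_filter,
    oddBelowEvenParts, sum_filter_not_add_sum_filter, sum_finsetsWithSum]

end QPartition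

open scoped Classical in
theorem weighted_Q_theorem_general (n : ℕ) :
    ∑ S ∈ Qset n,
      (-1 : Polynomial ℤ) ^ (S.card - 1) *
        Polynomial.X ^ ((S.filter (fun x => Odd x)).card) =
      if IsSquare n then (-(Polynomial.X : Polynomial ℤ)) ^ Nat.sqrt n else 0 :=
  (QPartition.sum_Qset Polynomial.X n).trans (QPartition.sum_oddBelowEvenParts Polynomial.X n)

open scoped Classical in
/-- `∑_{λ ∈ Q(n)} (-1)^{ℓ(λ)-1} a^{ℓ_o(λ)} = (-a)^k` if `n = k²` and `0` otherwise. -/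
theorem weighted_Q_theorem (n : ℕ) (hn : 1 ≤ n) :
    ∑ S ∈ Qset n,
      (-1 : Polynomial ℤ) ^ (S.card - 1) *
        Polynomial.X ^ ((S.filter (fun x => Odd x)).card) =
      if IsSquare n then (-(Polynomial.X : Polynomial ℤ)) ^ Nat.sqrt n else 0 :=
  weighted_Q_theorem_general n
end

section
/- As formal power series in q: ∑_{n≥0} q^{2n} (q^{2n+2};q^2)_∞ (-q^{2n+1};q^2)_∞ = ∑_{k≥0} q^{k^2}. -/
/-!
Write `T n = (q^{2n+2};q²)_∞`, so that `T (n-1) = (1 - q^{2n}) T n`. Multiplying the left-hand side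
by `T 0`, Euler's expansion of `(-q^{2n+1};q²)_∞` turns it into a double sum
`∑_{n,j} q^{2n} T n · q^{j²+2nj} T j`; summing over `n` first, Euler's expansion of
`1/(q^{2j+2};q²)_∞` collapses the inner sum to `T 0 / T j`, leaving `T 0 · ∑_j q^{j²}`.
Both expansions are proved, cleared of denominators, from their functional equations. The
computation takes place in a commutative ring where `q^{N+1} = 0`: there the infinite products
and sums are the finite ones of the statement and `T 0` is a unit.
-/

open Finset

theorem eq_of_eq_mul_succ {A : Type*} [Mul A] {f g c : ℕ → A}
    (hf : ∀ n, f n = c n * f (n + 1)) (hg : ∀ n, g n = c n * g (n + 1))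
    (K : ℕ) (hK : ∀ n, K ≤ n → f n = g n) : f = g := by
  suffices h : ∀ k n, K ≤ n + k → f n = g n from funext fun n ↦ h K n (Nat.le_add_left K n)
  intro k
  induction k with
  | zero => exact hK
  | succ k ih => intro n hn; rw [hf, hg, ih (n + 1) (by omega)]

theorem PowerSeries.coeff_eq_of_mk_eq {R : Type*} [CommRing R] {N : ℕ} {f g : PowerSeries R}
    (h : Ideal.Quotient.mk (Ideal.span {X ^ (N + 1)}) f = Ideal.Quotient.mk _ g) :
    coeff N f = coeff N g := by
  rw [← sub_eq_zero, ← map_sub]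
  exact X_pow_dvd_iff.mp (Ideal.mem_span_singleton.mp (Ideal.Quotient.eq.mp h)) N N.lt_succ_self

namespace Andrews

variable {A : Type*} [CommRing A] {x : A} {N : ℕ}

/-- `(x^{2n+2};x²)_∞`, truncated. -/
def evenPoch (x : A) (N n : ℕ) : A := ∏ j ∈ range (N + 1), (1 - x ^ (2 * n + 2 + 2 * j))

/-- `(-x^{2n+1};x²)_∞`, truncated. -/
def oddPoch (x : A) (N n : ℕ) : A := ∏ j ∈ range (N + 1), (1 + x ^ (2 * n + 1 + 2 * j))

def eulerSum (x : A) (N n : ℕ) : A := ∑ j ∈ range (N + 1), x ^ (j ^ 2 + 2 * n * j) * evenPoch x N j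

def cauchySum (x : A) (N m : ℕ) : A := ∑ n ∈ range (N + 1), x ^ (2 * m * n) * evenPoch x N n

section
variable (hx : x ^ (N + 1) = 0)
include hx

theorem evenPoch_eq_mul_succ (n : ℕ) :
    evenPoch x N n = (1 - x ^ (2 * n + 2)) * evenPoch x N (n + 1) := by
  rw [evenPoch, evenPoch, prod_range_succ', prod_range_succ,
    pow_eq_zero_of_le (by omega : N < 2 * (n + 1) + 2 + 2 * N) hx, sub_zero, mul_one, mul_comm]
  ring_nf

theorem oddPoch_eq_mul_succ (n : ℕ) :
    oddPoch x N n = (1 + x ^ (2 * n + 1)) * oddPoch x N (n + 1) := by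
  rw [oddPoch, oddPoch, prod_range_succ', prod_range_succ,
    pow_eq_zero_of_le (by omega : N < 2 * (n + 1) + 1 + 2 * N) hx, add_zero, mul_one, mul_comm]
  ring_nf

theorem evenPoch_eq_one {n : ℕ} (hn : N < 2 * n + 2) : evenPoch x N n = 1 :=
  prod_eq_one fun j _ ↦ by rw [pow_eq_zero_of_le (by omega) hx, sub_zero]

theorem oddPoch_eq_one {n : ℕ} (hn : N < 2 * n + 1) : oddPoch x N n = 1 :=
  prod_eq_one fun j _ ↦ by rw [pow_eq_zero_of_le (by omega) hx, add_zero]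

theorem sum_mul_one_sub_mul_evenPoch (f : ℕ → A) :
    ∑ j ∈ range (N + 1), f j * ((1 - x ^ (2 * j)) * evenPoch x N j) =
      ∑ j ∈ range N, f (j + 1) * evenPoch x N j := by
  rw [sum_range_succ', mul_zero, pow_zero, sub_self, zero_mul, mul_zero, add_zero]
  exact sum_congr rfl fun j _ ↦ by rw [mul_add_one 2 j, ← evenPoch_eq_mul_succ hx]

theorem eulerSum_eq_mul_succ (n : ℕ) :
    eulerSum x N n = (1 + x ^ (2 * n + 1)) * eulerSum x N (n + 1) := by
  have hdiff : eulerSum x N n - eulerSum x N (n + 1) = x ^ (2 * n + 1) * eulerSum x N (n + 1) := by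
    calc eulerSum x N n - eulerSum x N (n + 1)
        = ∑ j ∈ range (N + 1), x ^ (j ^ 2 + 2 * n * j) * ((1 - x ^ (2 * j)) * evenPoch x N j) := by
          rw [eulerSum, eulerSum, ← sum_sub_distrib]
          exact sum_congr rfl fun j _ ↦ by ring
      _ = ∑ j ∈ range N, x ^ (2 * n + 1) * (x ^ (j ^ 2 + 2 * (n + 1) * j) * evenPoch x N j) := by
          rw [sum_mul_one_sub_mul_evenPoch hx]
          exact sum_congr rfl fun j _ ↦ by ring
      _ = x ^ (2 * n + 1) * eulerSum x N (n + 1) := by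
          have hlast : N < 2 * n + 1 + (N ^ 2 + 2 * (n + 1) * N) := by nlinarith
          rw [eulerSum, sum_range_succ _ N, mul_add (x ^ (2 * n + 1)), ← mul_assoc, ← pow_add,
            pow_eq_zero_of_le hlast hx, zero_mul, add_zero, mul_sum]
  linear_combination hdiff

theorem eulerSum_eq_evenPoch_zero {n : ℕ} (hn : N < 2 * n + 1) :
    eulerSum x N n = evenPoch x N 0 := by
  rw [eulerSum, sum_eq_single_of_mem 0 (mem_range.2 N.succ_pos)]
  · simp
  · intro j _ hj
    rw [pow_eq_zero_of_le (by nlinarith [Nat.one_le_iff_ne_zero.2 hj]) hx, zero_mul]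

/-- Euler's `(-zx;x²)_∞ = ∑_j z^j x^{j²} / (x²;x²)_j` at `z = x^{2n}`, times `(x²;x²)_∞`. -/
theorem evenPoch_zero_mul_oddPoch (n : ℕ) :
    evenPoch x N 0 * oddPoch x N n = eulerSum x N n := by
  refine congrFun (eq_of_eq_mul_succ (f := fun n ↦ evenPoch x N 0 * oddPoch x N n)
    (c := fun n ↦ 1 + x ^ (2 * n + 1)) (fun n ↦ ?_)
    (eulerSum_eq_mul_succ hx) N fun n hn ↦ ?_) n
  · rw [oddPoch_eq_mul_succ hx]; ring
  · rw [oddPoch_eq_one hx (by omega), mul_one, eulerSum_eq_evenPoch_zero hx (by omega)]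

theorem cauchySum_add_two (m : ℕ) :
    cauchySum x N (m + 2) = (1 - x ^ (2 * m + 2)) * cauchySum x N (m + 1) := by
  have hdiff : cauchySum x N (m + 1) - cauchySum x N (m + 2) =
      x ^ (2 * m + 2) * cauchySum x N (m + 1) := by
    calc cauchySum x N (m + 1) - cauchySum x N (m + 2)
        = ∑ n ∈ range (N + 1), x ^ (2 * (m + 1) * n) * ((1 - x ^ (2 * n)) * evenPoch x N n) := by
          rw [cauchySum, cauchySum, ← sum_sub_distrib]
          exact sum_congr rfl fun n _ ↦ by ring
      _ = ∑ n ∈ range N, x ^ (2 * m + 2) * (x ^ (2 * (m + 1) * n) * evenPoch x N n) := by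
          rw [sum_mul_one_sub_mul_evenPoch hx]
          exact sum_congr rfl fun n _ ↦ by ring
      _ = x ^ (2 * m + 2) * cauchySum x N (m + 1) := by
          have hlast : N < 2 * m + 2 + 2 * (m + 1) * N := by nlinarith
          rw [cauchySum, sum_range_succ _ N, mul_add (x ^ (2 * m + 2)), ← mul_assoc, ← pow_add,
            pow_eq_zero_of_le hlast hx, zero_mul, add_zero, mul_sum]
  linear_combination -hdiff

theorem cauchySum_eq_evenPoch_zero {m : ℕ} (hm : N < 2 * m) :
    cauchySum x N m = evenPoch x N 0 := by
  rw [cauchySum, sum_eq_single_of_mem 0 (mem_range.2 N.succ_pos)]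
  · simp
  · intro n _ hn
    rw [pow_eq_zero_of_le (by nlinarith [Nat.one_le_iff_ne_zero.2 hn]) hx, zero_mul]

/-- Euler's `1 / (z;x²)_∞ = ∑_n z^n / (x²;x²)_n` at `z = x^{2j+2}`, times `(z;x²)_∞ (x²;x²)_∞`. -/
theorem evenPoch_mul_cauchySum (j : ℕ) :
    evenPoch x N j * cauchySum x N (j + 1) = evenPoch x N 0 := by
  refine congrFun (eq_of_eq_mul_succ (f := fun j ↦ evenPoch x N j * cauchySum x N (j + 1))
    (g := fun _ ↦ evenPoch x N 0) (c := fun _ ↦ 1) (fun j ↦ ?_) (fun _ ↦ (one_mul _).symm) N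
    fun j hj ↦ ?_) j
  · rw [evenPoch_eq_mul_succ hx, cauchySum_add_two hx]; ring
  · rw [evenPoch_eq_one hx (by omega), one_mul, cauchySum_eq_evenPoch_zero hx (by omega)]

theorem isUnit_evenPoch (n : ℕ) : IsUnit (evenPoch x N n) :=
  IsUnit.prod_iff.2 fun _ _ ↦ IsNilpotent.isUnit_one_sub ⟨N + 1, by
    rw [← pow_mul, pow_eq_zero_of_le (by nlinarith) hx]⟩

theorem sum_pow_mul_evenPoch_mul_oddPoch :
    ∑ n ∈ range (N + 1), x ^ (2 * n) * evenPoch x N n * oddPoch x N n =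
      ∑ k ∈ range (N + 1), x ^ (k ^ 2) := by
  refine (isUnit_evenPoch hx 0).mul_left_cancel ?_
  calc evenPoch x N 0 * ∑ n ∈ range (N + 1), x ^ (2 * n) * evenPoch x N n * oddPoch x N n
      = ∑ n ∈ range (N + 1), ∑ j ∈ range (N + 1),
          x ^ (j ^ 2) * evenPoch x N j * (x ^ (2 * (j + 1) * n) * evenPoch x N n) := by
        rw [mul_sum]
        refine sum_congr rfl fun n _ ↦ ?_
        rw [mul_comm, mul_assoc, mul_comm (oddPoch _ _ _), evenPoch_zero_mul_oddPoch hx, eulerSum,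
          mul_sum]
        refine sum_congr rfl fun j _ ↦ ?_
        ring
    _ = ∑ j ∈ range (N + 1), x ^ (j ^ 2) * (evenPoch x N j * cauchySum x N (j + 1)) := by
        rw [sum_comm]
        simp only [cauchySum, mul_sum, mul_assoc]
    _ = evenPoch x N 0 * ∑ k ∈ range (N + 1), x ^ (k ^ 2) := by
        simp only [evenPoch_mul_cauchySum hx, mul_sum, mul_comm]

end

end Andrews

/-- `∑_{n≥0} q^{2n} (q^{2n+2};q²)_∞ (-q^{2n+1};q²)_∞ = ∑_{k≥0} q^{k²}` as formal power
series in `q` over `ℤ`.  Summands with `n > N` and factors of the infinite products with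
index `j > N` have no effect on the `N`-th coefficient, so that coefficient is computed
from the displayed finite truncations. -/
theorem andrews_specialized (N : ℕ) :
    PowerSeries.coeff (R := ℤ) N
      (∑ n ∈ Finset.range (N + 1),
        PowerSeries.X ^ (2 * n) *
          (∏ j ∈ Finset.range (N + 1), (1 - PowerSeries.X ^ (2 * n + 2 + 2 * j))) *
          (∏ j ∈ Finset.range (N + 1), (1 + PowerSeries.X ^ (2 * n + 1 + 2 * j)))) =
    PowerSeries.coeff (R := ℤ) N
      (∑ k ∈ Finset.range (N + 1), PowerSeries.X ^ (k ^ 2)) := by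
  refine PowerSeries.coeff_eq_of_mk_eq ?_
  have hX : Ideal.Quotient.mk (Ideal.span {PowerSeries.X ^ (N + 1)}) (PowerSeries.X (R := ℤ)) ^
      (N + 1) = 0 := by
    rw [← map_pow, Ideal.Quotient.eq_zero_iff_mem]
    exact Ideal.mem_span_singleton_self _
  simpa only [map_sum, map_mul, map_prod, map_pow, map_sub, map_add, map_one, Andrews.evenPoch,
    Andrews.oddPoch] using Andrews.sum_pow_mul_evenPoch_mul_oddPoch hX
end

section
/- For positive integers k and m, there is a bijection between the set B_{k,m} of partitions into k distinct odd parts π_1 > π_2 > ... > π_k with π_i - π_{i+1} ≤ 2m for all i (with π_{k+1} := 0), and the set H_{k,m} of partitions in which every part is at most k and every part occurs with even multiplicity strictly less than 2m; under this bijection a partition λ ∈ B_{k,m} of total size N corresponds to a partition in H_{k,m} of total size N - k^2. -/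
/-!
Both sets are in bijection with the sequences `a : Fin k → ℕ` bounded by `m`. On the `H` side,
`a i` is half the multiplicity of the part `i + 1`. On the `B` side, `a` records the gaps: for a
partition `π` in `B_{k,m}` we have `π_i - π_{i+1} = 2 (a i + 1)` for `i + 1 < k` and
`π_{k-1} = 2 a (k - 1) + 1`, i.e. `π_i = 2 ∑_{j ≥ i} (a j + 1) - 1`; the gap bound `2m` is exactly
`a i < m`. Summing over `i`, each `a j` is counted `2 (j + 1)` times, which is the size of the
`H`-partition, and the constant terms add up to `1 + 3 + ⋯ + (2k - 1) = k²`.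
-/

open Finset

namespace BEquivH

variable {k m : ℕ}

theorem sum_range_sum_Ico {M : Type*} [AddCommMonoid M] (f : ℕ → M) (n : ℕ) :
    ∑ i ∈ range n, ∑ j ∈ Ico i n, f j = ∑ j ∈ range n, (j + 1) • f j := by
  rw [range_eq_Ico, sum_Ico_Ico_comm]
  simp [sum_const]

theorem sum_range_two_mul_succ (n : ℕ) : ∑ j ∈ range n, 2 * (j + 1) = n ^ 2 + n := by
  induction n with
  | zero => simp
  | succ n ih => rw [sum_range_succ, ih]; ring

def extendZero (a : Fin k → ℕ) (j : ℕ) : ℕ := if h : j < k then a ⟨j, h⟩ else 0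

theorem extendZero_of_lt (a : Fin k → ℕ) {j : ℕ} (h : j < k) : extendZero a j = a ⟨j, h⟩ :=
  dif_pos h

@[simp]
theorem extendZero_val (a : Fin k → ℕ) (i : Fin k) : extendZero a i = a i := by
  simp [extendZero]

def tailSum (a : Fin k → ℕ) (i : ℕ) : ℕ := ∑ j ∈ Ico i k, (extendZero a j + 1)

theorem tailSum_of_lt (a : Fin k → ℕ) {i : ℕ} (hi : i < k) :
    tailSum a i = extendZero a i + 1 + tailSum a (i + 1) :=
  sum_eq_sum_Ico_succ_bot hi _

theorem tailSum_of_le (a : Fin k → ℕ) {i : ℕ} (hi : k ≤ i) : tailSum a i = 0 := by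
  rw [tailSum, Ico_eq_empty_of_le hi, sum_empty]

theorem one_le_tailSum (a : Fin k → ℕ) {i : ℕ} (hi : i < k) : 1 ≤ tailSum a i := by
  rw [tailSum_of_lt a hi]; omega

def oddParts (a : Fin k → ℕ) : List ℕ := List.ofFn fun i : Fin k => 2 * tailSum a i - 1

@[simp]
theorem length_oddParts (a : Fin k → ℕ) : (oddParts a).length = k := by
  simp [oddParts]

theorem getD_oddParts (a : Fin k → ℕ) (i : ℕ) : (oddParts a).getD i 0 = 2 * tailSum a i - 1 := by
  rcases lt_or_ge i k with h | h
  · rw [List.getD_eq_getElem _ _ (by simpa using h)]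
    simp [oddParts]
  · rw [List.getD_eq_default _ _ (by simpa using h), tailSum_of_le a h]

theorem sum_oddParts (a : Fin k → ℕ) :
    (oddParts a).sum = k ^ 2 + ∑ i : Fin k, 2 * (i + 1) * a i := by
  have hsum : (oddParts a).sum + k = ∑ i ∈ range k, 2 * tailSum a i := by
    have hpos : ∀ i ∈ range k, 2 * tailSum a i = (2 * tailSum a i - 1) + 1 := fun i hi => by
      have := one_le_tailSum a (mem_range.mp hi); omega
    rw [sum_congr rfl hpos, sum_add_distrib, oddParts, List.sum_ofFn,
      Fin.sum_univ_eq_sum_range (fun i => 2 * tailSum a i - 1)]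
    simp
  have hweights : ∑ i ∈ range k, 2 * tailSum a i
      = ∑ j ∈ range k, 2 * (j + 1) * extendZero a j + ∑ j ∈ range k, 2 * (j + 1) := by
    rw [← mul_sum, ← sum_add_distrib]
    unfold tailSum
    rw [sum_range_sum_Ico, mul_sum]
    exact sum_congr rfl fun j _ => by ring
  rw [← Fin.sum_univ_eq_sum_range (fun j => 2 * (j + 1) * extendZero a j)] at hweights
  simp only [extendZero_val, sum_range_two_mul_succ] at hweights
  omega

def halfGaps (k : ℕ) (l : List ℕ) (i : Fin k) : ℕ := (l.getD i 0 - l.getD (i + 1) 0 - 1) / 2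

theorem halfGaps_oddParts (a : Fin k → ℕ) : halfGaps k (oddParts a) = a := by
  funext i
  have hS := tailSum_of_lt a i.2
  rw [extendZero_val] at hS
  rw [halfGaps, getD_oddParts, getD_oddParts]
  rcases lt_or_ge (i.1 + 1) k with h | h
  · have := one_le_tailSum a h; omega
  · have := tailSum_of_le a h; omega

def IsB (k m : ℕ) (l : List ℕ) : Prop :=
  l.length = k ∧ (∀ x ∈ l, Odd x) ∧ l.IsChain (· > ·) ∧
    ∀ i < k, l.getD i 0 - l.getD (i + 1) 0 ≤ 2 * m

namespace IsB

variable {l : List ℕ}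

theorem odd_getD (hl : IsB k m l) {i : ℕ} (hi : i < k) : Odd (l.getD i 0) := by
  have hlen : i < l.length := hl.1 ▸ hi
  rw [List.getD_eq_getElem _ _ hlen]
  exact hl.2.1 _ (List.getElem_mem hlen)

theorem getD_succ_lt (hl : IsB k m l) {i : ℕ} (hi : i < k) :
    l.getD (i + 1) 0 < l.getD i 0 := by
  rcases lt_or_ge (i + 1) k with h | h
  · have hlen : i + 1 < l.length := hl.1 ▸ h
    rw [List.getD_eq_getElem _ _ hlen, List.getD_eq_getElem _ _ (by omega)]
    exact List.isChain_iff_getElem.mp hl.2.2.1 i hlen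
  · rw [List.getD_eq_default _ _ (by rw [hl.1]; omega)]
    exact (hl.odd_getD hi).pos

theorem getD_eq_tailSum (hl : IsB k m l) (i : ℕ) :
    l.getD i 0 = 2 * tailSum (halfGaps k l) i - 1 := by
  induction hn : k - i generalizing i with
  | zero =>
    rw [tailSum_of_le _ (by omega), List.getD_eq_default _ _ (by rw [hl.1]; omega)]
  | succ n ih =>
    have hi : i < k := by omega
    have hS := tailSum_of_lt (halfGaps k l) hi
    have hhalf : halfGaps k l ⟨i, hi⟩ = (l.getD i 0 - l.getD (i + 1) 0 - 1) / 2 := rfl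
    rw [extendZero_of_lt _ hi, hhalf] at hS
    have hnext := ih (i + 1) (by omega)
    have hgap := hl.getD_succ_lt hi
    obtain ⟨r, hr⟩ := hl.odd_getD hi
    rcases lt_or_ge (i + 1) k with h | h
    · obtain ⟨s, hs⟩ := hl.odd_getD h
      omega
    · have hlast : l.getD (i + 1) 0 = 0 := List.getD_eq_default _ _ (by rw [hl.1]; omega)
      omega

theorem oddParts_halfGaps (hl : IsB k m l) : oddParts (halfGaps k l) = l :=
  List.ext_getElem (by rw [length_oddParts, hl.1]) fun i _ _ => by
    rw [← List.getD_eq_getElem _ 0, ← List.getD_eq_getElem _ 0, getD_oddParts, hl.getD_eq_tailSum]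

theorem halfGaps_lt (hl : IsB k m l) (i : Fin k) : halfGaps k l i < m := by
  have := hl.2.2.2 i i.2
  have := hl.getD_succ_lt i.2
  rw [halfGaps]
  omega

end IsB

theorem isB_oddParts {a : Fin k → ℕ} (ha : ∀ i, a i < m) : IsB k m (oddParts a) := by
  refine ⟨length_oddParts a, ?_, ?_, ?_⟩
  · rintro x hx
    obtain ⟨i, rfl⟩ := List.mem_ofFn.mp hx
    have := one_le_tailSum a i.2
    exact Nat.odd_iff.mpr (by omega)
  · refine List.isChain_iff_getElem.mpr fun i hi => ?_
    rw [length_oddParts] at hi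
    rw [← List.getD_eq_getElem _ 0, ← List.getD_eq_getElem _ 0, getD_oddParts, getD_oddParts,
      tailSum_of_lt a (by omega)]
    have := one_le_tailSum a hi
    omega
  · intro i hi
    rw [getD_oddParts, getD_oddParts, tailSum_of_lt a hi]
    have := ha ⟨i, hi⟩
    rw [← extendZero_of_lt a hi] at this
    omega

abbrev Bounded (k m : ℕ) : Type := {a : Fin k → ℕ // ∀ i, a i < m}

def boundedEquivB (k m : ℕ) : Bounded k m ≃ {l : List ℕ // IsB k m l} where
  toFun a := ⟨oddParts a.1, isB_oddParts a.2⟩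
  invFun l := ⟨halfGaps k l.1, l.2.halfGaps_lt⟩
  left_inv a := Subtype.ext (halfGaps_oddParts a.1)
  right_inv l := Subtype.ext l.2.oddParts_halfGaps

def IsH (k m : ℕ) (μ : Multiset ℕ) : Prop :=
  (∀ x ∈ μ, 0 < x ∧ x ≤ k) ∧ ∀ x : ℕ, Even (μ.count x) ∧ μ.count x < 2 * m

def doubledParts (a : Fin k → ℕ) : Multiset ℕ := ∑ i, Multiset.replicate (2 * a i) (i.1 + 1)

theorem count_doubledParts_succ (a : Fin k → ℕ) (i : Fin k) :
    (doubledParts a).count (i.1 + 1) = 2 * a i := by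
  rw [doubledParts, Multiset.count_sum', sum_eq_single i]
  · simp
  · intro j _ hj
    rw [Multiset.count_replicate, if_neg (by omega)]
  · simp

theorem count_doubledParts_of_ne (a : Fin k → ℕ) {x : ℕ} (hx : ∀ i : Fin k, x ≠ i.1 + 1) :
    (doubledParts a).count x = 0 := by
  rw [doubledParts, Multiset.count_sum']
  exact sum_eq_zero fun j _ => by rw [Multiset.count_replicate, if_neg (hx j).symm]

theorem sum_doubledParts (a : Fin k → ℕ) :
    (doubledParts a).sum = ∑ i : Fin k, 2 * (i + 1) * a i := by
  rw [doubledParts, Multiset.sum_sum]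
  exact sum_congr rfl fun i _ => by rw [Multiset.sum_replicate, smul_eq_mul]; ring

theorem isH_doubledParts (hm : 0 < m) {a : Fin k → ℕ} (ha : ∀ i, a i < m) :
    IsH k m (doubledParts a) := by
  refine ⟨fun x hx => ?_, fun x => ?_⟩
  · obtain ⟨i, -, hxi⟩ := Multiset.mem_sum.mp hx
    rw [Multiset.eq_of_mem_replicate hxi]
    omega
  · by_cases hx : ∃ i : Fin k, x = i.1 + 1
    · obtain ⟨i, rfl⟩ := hx
      rw [count_doubledParts_succ]
      exact ⟨even_two_mul _, by have := ha i; omega⟩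
    · push Not at hx
      rw [count_doubledParts_of_ne a hx]
      exact ⟨Even.zero, by omega⟩

def halfMultiplicities (k : ℕ) (μ : Multiset ℕ) (i : Fin k) : ℕ := μ.count (i.1 + 1) / 2

namespace IsH

variable {μ : Multiset ℕ}

theorem halfMultiplicities_lt (hμ : IsH k m μ) (i : Fin k) : halfMultiplicities k μ i < m := by
  have := (hμ.2 (i.1 + 1)).2
  rw [halfMultiplicities]
  omega

theorem doubledParts_halfMultiplicities (hμ : IsH k m μ) :
    doubledParts (halfMultiplicities k μ) = μ := by
  ext x
  by_cases hx : ∃ i : Fin k, x = i.1 + 1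
  · obtain ⟨i, rfl⟩ := hx
    obtain ⟨r, hr⟩ := (hμ.2 (i.1 + 1)).1
    rw [count_doubledParts_succ, halfMultiplicities]
    omega
  · push Not at hx
    rw [count_doubledParts_of_ne _ hx, eq_comm, Multiset.count_eq_zero]
    intro hmem
    have := hμ.1 x hmem
    exact hx ⟨x - 1, by omega⟩ (by simp only; omega)

end IsH

theorem halfMultiplicities_doubledParts (a : Fin k → ℕ) :
    halfMultiplicities k (doubledParts a) = a := by
  funext i
  rw [halfMultiplicities, count_doubledParts_succ]
  omega

def boundedEquivH (hm : 0 < m) : Bounded k m ≃ {μ : Multiset ℕ // IsH k m μ} where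
  toFun a := ⟨doubledParts a.1, isH_doubledParts hm a.2⟩
  invFun μ := ⟨halfMultiplicities k μ.1, μ.2.halfMultiplicities_lt⟩
  left_inv a := Subtype.ext (halfMultiplicities_doubledParts a.1)
  right_inv μ := Subtype.ext μ.2.doubledParts_halfMultiplicities

def bEquivH (hm : 0 < m) : {l : List ℕ // IsB k m l} ≃ {μ : Multiset ℕ // IsH k m μ} :=
  (boundedEquivB k m).symm.trans (boundedEquivH hm)

theorem sum_eq_sq_add_sum_bEquivH (hm : 0 < m) (b : {l : List ℕ // IsB k m l}) :
    b.1.sum = k ^ 2 + (bEquivH hm b).1.sum := by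
  obtain ⟨a, rfl⟩ := (boundedEquivB k m).surjective b
  rw [bEquivH, Equiv.trans_apply, Equiv.symm_apply_apply]
  exact (sum_oddParts a.1).trans (congrArg _ (sum_doubledParts a.1).symm)

end BEquivH

theorem B_equiv_H_general (k m : ℕ) (hm : 0 < m) :
    ∃ e : {l : List ℕ // l.length = k ∧ (∀ x ∈ l, Odd x) ∧ l.Chain' (· > ·) ∧
            ∀ i < k, l.getD i 0 - l.getD (i + 1) 0 ≤ 2 * m} ≃
          {μ : Multiset ℕ // (∀ x ∈ μ, 0 < x ∧ x ≤ k) ∧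
            ∀ x : ℕ, Even (μ.count x) ∧ μ.count x < 2 * m},
      ∀ b, (b : {l : List ℕ // l.length = k ∧ (∀ x ∈ l, Odd x) ∧ l.Chain' (· > ·) ∧
            ∀ i < k, l.getD i 0 - l.getD (i + 1) 0 ≤ 2 * m}).1.sum
          = k ^ 2 + ((e b).1.sum) :=
  ⟨BEquivH.bEquivH hm, BEquivH.sum_eq_sq_add_sum_bEquivH hm⟩

/-- There is a bijection between `B_{k,m}` (partitions into `k` distinct odd parts,
listed in decreasing order, with consecutive gaps at most `2m`, including the gap from
the smallest part to `0`) and `H_{k,m}` (partitions with every part at most `k` and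
every part occurring with even multiplicity `< 2m`), under which a partition of total
size `N` in `B_{k,m}` corresponds to a partition of total size `N - k²` in `H_{k,m}`. -/
theorem B_equiv_H (k m : ℕ) (hk : 0 < k) (hm : 0 < m) :
    ∃ e : {l : List ℕ // l.length = k ∧ (∀ x ∈ l, Odd x) ∧ l.Chain' (· > ·) ∧
            ∀ i < k, l.getD i 0 - l.getD (i + 1) 0 ≤ 2 * m} ≃
          {μ : Multiset ℕ // (∀ x ∈ μ, 0 < x ∧ x ≤ k) ∧
            ∀ x : ℕ, Even (μ.count x) ∧ μ.count x < 2 * m},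
      ∀ b, (b : {l : List ℕ // l.length = k ∧ (∀ x ∈ l, Odd x) ∧ l.Chain' (· > ·) ∧
            ∀ i < k, l.getD i 0 - l.getD (i + 1) 0 ≤ 2 * m}).1.sum
          = k ^ 2 + ((e b).1.sum) :=
  B_equiv_H_general k m hm
end

section
/- For positive integers k and m, the generating function for partitions into k distinct odd parts with consecutive differences at most 2m (including the gap from the smallest part to 0) equals q^{k^2} ∏_{j=1}^k (1 + q^{2j} + q^{4j} + ... + q^{2(m-1)j}), i.e., the number of such partitions of n equals the coefficient of q^{n-k^2} in ∏_{j=1}^k ∑_{i=0}^{m-1} q^{2ij}. -/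
/-!
Write the parts as `π₁ > ⋯ > πₖ > πₖ₊₁ = 0`. Since all parts are odd, the differences are
`πⱼ - πⱼ₊₁ = 2cⱼ + 2` for `j < k` and `πₖ = 2cₖ + 1`, and the bound `2m` on them says exactly
`0 ≤ cⱼ < m`. Conversely every such `c` rebuilds a partition, of
`n = ∑ⱼ πⱼ = k² + ∑ⱼ 2 j cⱼ`. So these partitions of `n` are counted by the ways of choosing one
term `q^{2 cⱼ j}` from each factor of the product with exponents summing to `n - k²`.
-/

/-- The list of parts of a finset of naturals in decreasing order. -/
def descList (S : Finset ℕ) : List ℕ := (S.sort (· ≤ ·)).reverse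

open Finset Polynomial

theorem Polynomial.coeff_prod_sum_X_pow {R ι κ : Type*} [CommSemiring R] [Fintype ι]
    [DecidableEq ι] (t : ι → Finset κ) (e : ι → κ → ℕ) (N : ℕ) :
    (∏ j, ∑ i ∈ t j, (X : R[X]) ^ e j i).coeff N =
      #{c ∈ Fintype.piFinset t | ∑ j, e j (c j) = N} := by
  simp only [prod_univ_sum, prod_pow_eq_pow_sum, finsetSum_coeff, coeff_X_pow,
    natCast_card_filter, eq_comm]

theorem prod_Icc_one_eq_prod_fin {M : Type*} [CommMonoid M] (f : ℕ → M) (k : ℕ) :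
    ∏ j ∈ Icc 1 k, f j = ∏ j : Fin k, f (j + 1) := by
  rw [← Finset.Ico_add_one_right_eq_Icc, prod_Ico_eq_prod_range, ← Fin.prod_univ_eq_prod_range]
  simp [add_comm]

lemma toFinset_descList (S : Finset ℕ) : (descList S).toFinset = S := by
  simp [descList]

lemma length_descList (S : Finset ℕ) : (descList S).length = S.card := by
  simp [descList]

lemma pairwise_descList (S : Finset ℕ) : (descList S).Pairwise (· > ·) := by
  rw [descList, List.pairwise_reverse]
  exact S.sortedLT_sort.pairwise

lemma descList_toFinset {l : List ℕ} (hl : l.Pairwise (· > ·)) :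
    descList l.toFinset = l := by
  have h : l.toFinset.sort (· ≤ ·) = l.reverse := by
    apply List.Perm.eq_of_pairwise' (r := (· ≤ ·))
    · exact Finset.pairwise_sort _ _
    · rw [List.pairwise_reverse]
      exact hl.imp le_of_lt
    · exact ((Finset.sort_perm_toList _ _).trans (List.toFinset_toList hl.nodup)).trans
        l.reverse_perm.symm
  simp [descList, h]

section descList

variable {S : Finset ℕ} {i : ℕ}

lemma getD_descList_of_le (hi : S.card ≤ i) : (descList S).getD i 0 = 0 :=
  List.getD_eq_default _ _ (by rwa [length_descList])

lemma odd_getD_descList (hodd : ∀ x ∈ S, Odd x) (hi : i < S.card) :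
    Odd ((descList S).getD i 0) := by
  rw [← length_descList] at hi
  rw [List.getD_eq_getElem _ _ hi]
  exact hodd _ (by simpa [toFinset_descList] using List.mem_toFinset.2 (List.getElem_mem hi))

lemma getD_descList_succ_lt (hodd : ∀ x ∈ S, Odd x) (hi : i < S.card) :
    (descList S).getD (i + 1) 0 < (descList S).getD i 0 := by
  rcases Nat.lt_or_ge (i + 1) S.card with hi' | hi'
  · rw [← length_descList] at hi hi'
    rw [List.getD_eq_getElem _ _ hi, List.getD_eq_getElem _ _ hi']
    exact List.pairwise_iff_getElem.1 (pairwise_descList S) _ _ hi hi' (by omega)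
  · rw [getD_descList_of_le hi']
    exact (odd_getD_descList hodd hi).pos

end descList

namespace OddGapPartition

variable {k : ℕ} (c : Fin k → ℕ)

def halfPart (i : ℕ) : ℕ := ∑ j ∈ univ.filter (fun j : Fin k => i ≤ j), (c j + 1)

/-- The parts built from `c` are `part c 0 > ⋯ > part c (k - 1)`; truncated subtraction makes
`part c i = 0` for `i ≥ k`, matching the default of `getD` used to read off parts. -/
def part (i : ℕ) : ℕ := 2 * halfPart c i - 1

def ofGaps : Finset ℕ := (List.ofFn fun i : Fin k => part c i).toFinset

lemma halfPart_of_le {i : ℕ} (hi : k ≤ i) : halfPart c i = 0 := by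
  refine sum_eq_zero fun j hj => ?_
  have := (mem_filter.1 hj).2
  omega

lemma halfPart_succ {i : ℕ} (hi : i < k) : halfPart c i = halfPart c (i + 1) + c ⟨i, hi⟩ + 1 := by
  have : univ.filter (fun j : Fin k => i ≤ j) =
      insert ⟨i, hi⟩ (univ.filter fun j : Fin k => i + 1 ≤ j) := by
    ext j
    simp only [mem_filter, mem_univ, true_and, Order.add_one_le_iff, mem_insert, Fin.ext_iff]
    omega
  rw [halfPart, this, sum_insert (by simp), halfPart]
  ring

lemma halfPart_lt {i j : ℕ} (hij : i < j) (hi : i < k) : halfPart c j < halfPart c i := by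
  refine sum_lt_sum_of_subset (i := ⟨i, hi⟩) (fun l hl => ?_) (by simp) (by simp [hij])
    (by omega) (fun _ _ _ => by omega)
  simp only [mem_filter, mem_univ, true_and] at hl ⊢
  omega

lemma sum_halfPart : ∑ i : Fin k, halfPart c i = ∑ j : Fin k, ((j : ℕ) + 1) * (c j + 1) := by
  unfold halfPart
  rw [sum_comm' (t' := univ) (s' := fun j => Finset.Iic j)]
  · simp [Fin.card_Iic]
  · intro i j
    simp only [mem_univ, mem_filter, Finset.mem_Iic, true_and, and_true, Fin.le_iff_val_le_val]

lemma part_lt {i j : ℕ} (hij : i < j) (hi : i < k) : part c j < part c i := by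
  have := halfPart_lt c hij hi
  unfold part
  omega

lemma odd_part {i : ℕ} (hi : i < k) : Odd (part c i) := by
  have := halfPart_succ c hi
  exact ⟨halfPart c i - 1, by unfold part; omega⟩

lemma pairwise_ofFn_part : (List.ofFn fun i : Fin k => part c i).Pairwise (· > ·) :=
  List.pairwise_ofFn.2 fun i _ hij => part_lt c hij i.2

lemma getD_descList_ofGaps (i : ℕ) : (descList (ofGaps c)).getD i 0 = part c i := by
  rw [ofGaps, descList_toFinset (pairwise_ofFn_part c), List.getD_eq_getElem?_getD,
    List.getElem?_ofFn]
  split_ifs with hi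
  · rfl
  · simp [part, halfPart_of_le c (not_lt.1 hi)]

lemma card_ofGaps : (ofGaps c).card = k := by
  rw [ofGaps, List.toFinset_card_of_nodup (pairwise_ofFn_part c).nodup, List.length_ofFn]

lemma odd_of_mem_ofGaps {x : ℕ} (hx : x ∈ ofGaps c) : Odd x := by
  obtain ⟨i, rfl⟩ := List.mem_ofFn.1 (List.mem_toFinset.1 hx)
  exact odd_part c i.2

lemma sum_ofGaps : (ofGaps c).sum id = k ^ 2 + ∑ j, 2 * c j * (j + 1) := by
  have hpart : ∀ i : Fin k, part c i + 1 = 2 * halfPart c i := fun i => by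
    have := halfPart_succ c i.2
    unfold part
    omega
  have hgauss : ∑ j : Fin k, 2 * ((j : ℕ) + 1) = k ^ 2 + k := by
    have := sum_range_id_mul_two (k + 1)
    rw [sum_range_succ', add_zero, add_tsub_cancel_right] at this
    rw [Fin.sum_univ_eq_sum_range (fun j => 2 * (j + 1)), ← mul_sum, mul_comm, this]
    ring
  have hsum : ∑ i : Fin k, part c i + k = ∑ j, 2 * c j * (j + 1) + (k ^ 2 + k) := calc
    ∑ i : Fin k, part c i + k = ∑ i : Fin k, (part c i + 1) := by simp [sum_add_distrib]
    _ = 2 * ∑ i : Fin k, halfPart c i := by rw [mul_sum]; exact sum_congr rfl fun i _ => hpart i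
    _ = ∑ j : Fin k, (2 * c j * (j + 1) + 2 * ((j : ℕ) + 1)) := by
      rw [sum_halfPart, mul_sum]; exact sum_congr rfl fun j _ => by ring
    _ = ∑ j, 2 * c j * (j + 1) + (k ^ 2 + k) := by rw [sum_add_distrib, hgauss]
  rw [ofGaps, List.sum_toFinset _ (pairwise_ofFn_part c).nodup, List.map_id, List.sum_ofFn]
  omega

/-- Floor division recovers `cⱼ` both from an inner difference `2cⱼ + 2` and from the last
difference `2cₖ₋₁ + 1`. -/
def gaps (k : ℕ) (S : Finset ℕ) (j : Fin k) : ℕ :=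
  ((descList S).getD j 0 - (descList S).getD (j + 1) 0 - 1) / 2

lemma gaps_ofGaps : gaps k (ofGaps c) = c := by
  funext j
  simp only [gaps, getD_descList_ofGaps, part, halfPart_succ c j.2, Fin.eta]
  omega

lemma halfPart_gaps {S : Finset ℕ} (hcard : S.card = k) (hodd : ∀ x ∈ S, Odd x) (i : ℕ) :
    halfPart (gaps k S) i = ((descList S).getD i 0 + 1) / 2 := by
  induction hd : k - i generalizing i with
  | zero => rw [halfPart_of_le _ (by omega), getD_descList_of_le (by omega)]
  | succ d ih =>
    have hi : i < k := by omega
    rw [halfPart_succ _ hi, ih (i + 1) (by omega), gaps]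
    dsimp only
    have hlt := getD_descList_succ_lt hodd (hcard ▸ hi)
    obtain ⟨a, ha⟩ := odd_getD_descList hodd (hcard ▸ hi)
    rcases Nat.lt_or_ge (i + 1) k with hi' | hi'
    · obtain ⟨b, hb⟩ := odd_getD_descList hodd (hcard ▸ hi')
      omega
    · rw [getD_descList_of_le (by omega)]
      omega

lemma ofGaps_gaps {S : Finset ℕ} (hcard : S.card = k) (hodd : ∀ x ∈ S, Odd x) :
    ofGaps (gaps k S) = S := by
  rw [ofGaps]
  conv_rhs => rw [← toFinset_descList S]
  congr 1
  refine List.ext_getElem (by simp [length_descList, hcard]) fun i hi _ => ?_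
  rw [List.getElem_ofFn, part, halfPart_gaps hcard hodd, ← List.getD_eq_getElem _ 0, Fin.val_mk]
  obtain ⟨a, ha⟩ := odd_getD_descList hodd (by simpa [hcard] using hi)
  omega

open scoped Classical in
def oddGapPartitions (k m n : ℕ) : Finset (Finset ℕ) :=
  (range (n + 1)).powerset.filter fun S => S.sum id = n ∧ S.card = k ∧ (∀ x ∈ S, Odd x) ∧
    ∀ i < k, (descList S).getD i 0 - (descList S).getD (i + 1) 0 ≤ 2 * m

def gapVectors (k m N : ℕ) : Finset (Fin k → ℕ) :=
  {c ∈ Fintype.piFinset fun _ => range m | ∑ j, 2 * c j * (j + 1) = N}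

variable {m n : ℕ}

lemma ofGaps_mem_oddGapPartitions (hn : k ^ 2 ≤ n) (hc : c ∈ gapVectors k m (n - k ^ 2)) :
    ofGaps c ∈ oddGapPartitions k m n := by
  simp only [gapVectors, mem_filter, Fintype.mem_piFinset, mem_range] at hc
  obtain ⟨hcm, hsum⟩ := hc
  have hsum' : (ofGaps c).sum id = n := by rw [sum_ofGaps, hsum]; omega
  refine mem_filter.2 ⟨mem_powerset.2 fun x hx => mem_range.2 ?_, hsum', card_ofGaps c,
    fun x => odd_of_mem_ofGaps c, fun i hi => ?_⟩
  · exact Nat.lt_succ_of_le (hsum' ▸ single_le_sum (f := id) (fun _ _ => Nat.zero_le _) hx)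
  · have := hcm ⟨i, hi⟩
    simp only [getD_descList_ofGaps, part, halfPart_succ c hi]
    omega

lemma gaps_mem_gapVectors {S : Finset ℕ} (hS : S ∈ oddGapPartitions k m n) :
    gaps k S ∈ gapVectors k m (n - k ^ 2) := by
  simp only [oddGapPartitions, mem_filter] at hS
  obtain ⟨-, hsum, hcard, hodd, hgap⟩ := hS
  refine mem_filter.2 ⟨Fintype.mem_piFinset.2 fun j => mem_range.2 ?_, ?_⟩
  · have := hgap j j.2
    have := getD_descList_succ_lt hodd (i := j) (by omega)
    simp only [gaps]
    omega
  · have := sum_ofGaps (gaps k S)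
    rw [ofGaps_gaps hcard hodd] at this
    omega

theorem card_oddGapPartitions (hn : k ^ 2 ≤ n) :
    #(oddGapPartitions k m n) = #(gapVectors k m (n - k ^ 2)) :=
  card_bij' (fun S _ => gaps k S) (fun c _ => ofGaps c) (fun _ => gaps_mem_gapVectors)
    (fun c => ofGaps_mem_oddGapPartitions c hn)
    (fun _ hS => ofGaps_gaps (mem_filter.1 hS).2.2.1 (mem_filter.1 hS).2.2.2.1)
    (fun c _ => gaps_ofGaps c)

end OddGapPartition

open scoped Classical in
theorem B_km_generating_function_general (k m n : ℕ) (hn : k ^ 2 ≤ n) :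
    (((Finset.range (n + 1)).powerset.filter
      (fun S => S.sum id = n ∧ S.card = k ∧ (∀ x ∈ S, Odd x) ∧
        ∀ i < k, (descList S).getD i 0 - (descList S).getD (i + 1) 0 ≤ 2 * m)).card) =
    (∏ j ∈ Finset.Icc 1 k,
      ∑ i ∈ Finset.range m, (Polynomial.X : Polynomial ℕ) ^ (2 * i * j)).coeff
        (n - k ^ 2) := by
  rw [prod_Icc_one_eq_prod_fin (fun j => ∑ i ∈ range m, (X : ℕ[X]) ^ (2 * i * j)),
    coeff_prod_sum_X_pow, Nat.cast_id]
  exact OddGapPartition.card_oddGapPartitions hn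

open scoped Classical in
/-- The number of partitions of `n` into `k` distinct odd parts with consecutive
differences at most `2m` (including the gap from the smallest part to `0`) equals the
coefficient of `q^{n-k²}` in `∏_{j=1}^k (1 + q^{2j} + q^{4j} + ⋯ + q^{2(m-1)j})`. -/
theorem B_km_generating_function (k m n : ℕ) (hk : 0 < k) (hm : 0 < m)
    (hn : k ^ 2 ≤ n) :
    (((Finset.range (n + 1)).powerset.filter
      (fun S => S.sum id = n ∧ S.card = k ∧ (∀ x ∈ S, Odd x) ∧
        ∀ i < k, (descList S).getD i 0 - (descList S).getD (i + 1) 0 ≤ 2 * m)).card) =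
    (∏ j ∈ Finset.Icc 1 k,
      ∑ i ∈ Finset.range m, (Polynomial.X : Polynomial ℕ) ^ (2 * i * j)).coeff
        (n - k ^ 2) :=
  B_km_generating_function_general k m n hn
end
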